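/- arXiv:math-ph/9902002 — 6 statements merged into one kernel-verified Lean document; each statement's English description precedes it below -/
import Mathlib

section
/- Suppose Ψ : ℝ → ℝ satisfies Ψ'' = Ψ' + 2Ψ - 3Ψ² + Ψ³ on ℝ with Ψ(s) ~ e^{2s} as s → -∞ (and Ψ'(s) ~ 2e^{2s}). Then for all s, (1/2)Ψ'(s)² = Ψ(s)²(1 - Ψ(s)/2)² + ∫_{-∞}^{s} Ψ'(σ)² dσ. -/
/-!
The quantity `E = ½ Ψ'² - Ψ² (1 - Ψ/2)²` is an energy for the damped equation: the potential
`Ψ² (1 - Ψ/2)²` has derivative `2Ψ - 3Ψ² + Ψ³` in `Ψ`, so along a solution `E' = Ψ'²`, the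
damping term. The asymptotics force `Ψ, Ψ' → 0`, hence `E → 0`, at `-∞`, and integrating
`E' = Ψ'²` over `(-∞, s]` gives the identity.
-/

open Real Filter Set MeasureTheory Asymptotics Topology

noncomputable def dampedEnergy (Ψ : ℝ → ℝ) (s : ℝ) : ℝ :=
  (1 / 2) * deriv Ψ s ^ 2 - Ψ s ^ 2 * (1 - Ψ s / 2) ^ 2

theorem hasDerivAt_dampedEnergy {Ψ : ℝ → ℝ} {s : ℝ} (hΨ : DifferentiableAt ℝ Ψ s)
    (hΨ' : DifferentiableAt ℝ (deriv Ψ) s)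
    (hODE : deriv (deriv Ψ) s = deriv Ψ s + 2 * Ψ s - 3 * Ψ s ^ 2 + Ψ s ^ 3) :
    HasDerivAt (dampedEnergy Ψ) (deriv Ψ s ^ 2) s := by
  have h₁ := hΨ.hasDerivAt
  have kinetic := (hΨ'.hasDerivAt.pow 2).const_mul (1 / 2 : ℝ)
  have potential := (h₁.pow 2).mul (((h₁.div_const 2).const_sub 1).pow 2)
  refine (kinetic.sub potential).congr_deriv ?_
  rw [hODE]
  simp only [Pi.pow_apply]
  ring

theorem tendsto_nhds_zero_of_tendsto_div_one {α : Type*} {l : Filter α} {u v : α → ℝ}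
    (huv : Tendsto (fun x => u x / v x) l (𝓝 1)) (hv : Tendsto v l (𝓝 0)) :
    Tendsto u l (𝓝 0) :=
  (isEquivalent_of_tendsto_one huv).symm.tendsto_nhds hv

theorem tendsto_exp_two_mul_atBot : Tendsto (fun s : ℝ => exp (2 * s)) atBot (𝓝 0) :=
  tendsto_exp_atBot.comp (tendsto_id.const_mul_atBot two_pos)

theorem stmt2 (Ψ : ℝ → ℝ) (hC2 : ContDiff ℝ 2 Ψ)
    (hODE : ∀ s : ℝ, deriv (deriv Ψ) s =
      deriv Ψ s + 2 * Ψ s - 3 * (Ψ s) ^ 2 + (Ψ s) ^ 3)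
    (hasymp : Tendsto (fun s => Ψ s / Real.exp (2 * s)) atBot (nhds 1))
    (hasymp' : Tendsto (fun s => deriv Ψ s / (2 * Real.exp (2 * s))) atBot (nhds 1))
    (hint : ∀ s : ℝ, IntegrableOn (fun σ => (deriv Ψ σ) ^ 2) (Iic s)) :
    ∀ s : ℝ, (1 / 2) * (deriv Ψ s) ^ 2 =
      (Ψ s) ^ 2 * (1 - Ψ s / 2) ^ 2 + ∫ σ in Iic s, (deriv Ψ σ) ^ 2 := by
  intro s
  have hΨ : Differentiable ℝ Ψ := hC2.differentiable two_ne_zero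
  have hΨ' : Differentiable ℝ (deriv Ψ) :=
    (hC2.iterate_deriv' 1 1).differentiable one_ne_zero
  have hΨ_lim : Tendsto Ψ atBot (𝓝 0) :=
    tendsto_nhds_zero_of_tendsto_div_one hasymp tendsto_exp_two_mul_atBot
  have hΨ'_lim : Tendsto (deriv Ψ) atBot (𝓝 0) := by
    refine tendsto_nhds_zero_of_tendsto_div_one hasymp' ?_
    simpa using tendsto_exp_two_mul_atBot.const_mul 2
  have hE_lim : Tendsto (dampedEnergy Ψ) atBot (𝓝 0) := by
    unfold dampedEnergy
    have := ((hΨ'_lim.pow 2).const_mul (1 / 2 : ℝ)).sub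
      ((hΨ_lim.pow 2).mul (((hΨ_lim.div_const 2).const_sub 1).pow 2))
    simpa using this
  have key := integral_Iic_of_hasDerivAt_of_tendsto'
    (fun x _ => hasDerivAt_dampedEnergy (hΨ x) (hΨ' x) (hODE x)) (hint s) hE_lim
  rw [key, sub_zero, dampedEnergy]
  ring
end

section
/- Suppose Ψ : ℝ → ℝ is C², satisfies the identity (1/2)Ψ'(s)² = Ψ(s)²(1 - Ψ(s)/2)² + ∫_{-∞}^{s} Ψ'(σ)² dσ for all s, and Ψ(s) ~ e^{2s} as s → -∞ with Ψ' > 0 near -∞. Then Ψ' never vanishes, Ψ is strictly increasing, and Ψ crosses the value 1, i.e., there exists s₁ with Ψ(s₁) > 1. -/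
/-!
The integral term of the energy identity is a genuine, strictly positive integral: were `(Ψ')²`
not integrable at `-∞`, every integral `∫_{Iic s}` would take the junk value `0`, and the identity
would force `(Ψ')² = 2Ψ²(1 - Ψ/2)² = O(e^{4s})`, which is integrable. Hence
`(Ψ')² ≥ 2 ∫_{-∞}^s (Ψ')² > 0` everywhere, so `Ψ'` keeps the sign it has near `-∞`, and
`Ψ' ≥ √(2 ∫_{-∞}^0 (Ψ')²)` on `[0, ∞)`, so `Ψ` grows at least linearly and passes `1`.
-/

open Real Filter Set MeasureTheory Topology

lemma integrableAtFilter_atBot_of_tendsto_div_exp {f : ℝ → ℝ} {a c : ℝ} (ha : 0 < a)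
    (hf : Continuous f) (h : Tendsto (fun s => f s / exp (a * s)) atBot (𝓝 c)) :
    IntegrableAtFilter f atBot := by
  have hO : f =O[atBot] fun s => exp (a * s) :=
    Asymptotics.isBigO_of_div_tendsto_nhds
      (Eventually.of_forall fun s hs => absurd hs (exp_pos _).ne') c h
  exact hO.integrableAtFilter hf.aestronglyMeasurable.stronglyMeasurableAtFilter
    ⟨Iic 0, Iic_mem_atBot 0, integrableOn_exp_mul_Iic ha 0⟩

lemma tendsto_zero_of_tendsto_div_exp {f : ℝ → ℝ} {a c : ℝ} (ha : 0 < a)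
    (h : Tendsto (fun s => f s / exp (a * s)) atBot (𝓝 c)) : Tendsto f atBot (𝓝 0) := by
  have hexp : Tendsto (fun s => exp (a * s)) atBot (𝓝 0) :=
    tendsto_exp_atBot.comp (tendsto_id.const_mul_atBot ha)
  simpa using (h.mul hexp).congr fun s => div_mul_cancel₀ _ (exp_pos _).ne'

lemma tendsto_sq_mul_sq_div_exp {f : ℝ → ℝ} {c : ℝ}
    (h : Tendsto (fun s => f s / exp (2 * s)) atBot (𝓝 c)) :
    Tendsto (fun s => f s ^ 2 * (1 - f s / 2) ^ 2 / exp (4 * s)) atBot (𝓝 (c ^ 2)) := by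
  have hf0 := tendsto_zero_of_tendsto_div_exp two_pos h
  convert (h.pow 2).mul (((tendsto_const_nhds (x := (1 : ℝ))).sub (hf0.div_const 2)).pow 2)
    using 2
  · rw [div_pow, ← exp_nat_mul, div_mul_eq_mul_div]
    ring_nf
  · norm_num

lemma integrableAtFilter_atBot_of_mul_eq_add_integral_Iic {f g : ℝ → ℝ} {c : ℝ} (hc : c ≠ 0)
    (hg : IntegrableAtFilter g atBot) (h : ∀ s, c * f s = g s + ∫ σ in Iic s, f σ) :
    IntegrableAtFilter f atBot := by
  by_contra hf
  have hzero (s : ℝ) : ∫ σ in Iic s, f σ = 0 :=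
    integral_undef fun hs => hf ⟨Iic s, Iic_mem_atBot s, hs⟩
  obtain ⟨t, ht, hgt⟩ := hg
  have hfg : f = fun s => c⁻¹ * g s := funext fun s => by
    rw [eq_inv_mul_iff_mul_eq₀ hc, h s, hzero s, add_zero]
  exact hf ⟨t, ht, hfg ▸ hgt.const_mul c⁻¹⟩

lemma setIntegral_Iic_pos {f : ℝ → ℝ} {s : ℝ} (hf : IntegrableOn f (Iic s)) (hnn : 0 ≤ f)
    (hpos : ∀ᶠ x in atBot, 0 < f x) : 0 < ∫ x in Iic s, f x := by
  obtain ⟨a, ha⟩ := eventually_atBot.mp hpos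
  rw [setIntegral_pos_iff_support_of_nonneg_ae (Eventually.of_forall hnn) hf]
  have hsub : Iic (min a s) ⊆ Function.support f ∩ Iic s := fun x hx =>
    ⟨(ha x (hx.trans (min_le_left a s))).ne', hx.trans (min_le_right a s)⟩
  calc (0 : ENNReal) < volume (Iic (min a s)) := by simp
    _ ≤ _ := measure_mono hsub

lemma Continuous.pos_of_ne_zero {X : Type*} [TopologicalSpace X] [PreconnectedSpace X]
    {f : X → ℝ} (hf : Continuous f) (hne : ∀ x, f x ≠ 0) {a : X} (ha : 0 < f a) (x : X) :
    0 < f x := by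
  by_contra! hx
  obtain ⟨y, hy⟩ := intermediate_value_univ x a hf ⟨hx, ha.le⟩
  exact hne y hy

lemma exists_lt_of_le_deriv {f : ℝ → ℝ} {K a : ℝ} (hf : Differentiable ℝ f) (hK : 0 < K)
    (h : ∀ x, a ≤ x → K ≤ deriv f x) (b : ℝ) : ∃ x, b < f x := by
  set y := a + (|b - f a| + 1) / K
  have hay : a ≤ y := le_add_of_nonneg_right (by positivity)
  have hgrow := (convex_Ici a).mul_sub_le_image_sub_of_le_deriv hf.continuous.continuousOn
    hf.differentiableOn (fun x hx => h x (interior_subset hx)) a self_mem_Ici y hay hay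
  refine ⟨y, ?_⟩
  have : K * (y - a) = |b - f a| + 1 := by
    simp only [y, add_sub_cancel_left, mul_div_cancel₀ _ hK.ne']
  linarith [le_abs_self (b - f a)]

theorem stmt3 (Ψ : ℝ → ℝ) (hC2 : ContDiff ℝ 2 Ψ)
    (henergy : ∀ s : ℝ, (1 / 2) * (deriv Ψ s) ^ 2 =
      (Ψ s) ^ 2 * (1 - Ψ s / 2) ^ 2 + ∫ σ in Iic s, (deriv Ψ σ) ^ 2)
    (hasymp : Tendsto (fun s => Ψ s / Real.exp (2 * s)) atBot (nhds 1))
    (hpos : ∀ᶠ s in atBot, 0 < deriv Ψ s) :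
    (∀ s : ℝ, deriv Ψ s ≠ 0) ∧ StrictMono Ψ ∧ ∃ s₁ : ℝ, 1 < Ψ s₁ := by
  have hcont : Continuous (deriv Ψ) := hC2.continuous_deriv (by norm_num)
  have hint (s : ℝ) : IntegrableOn (fun σ => deriv Ψ σ ^ 2) (Iic s) :=
    integrableOn_Iic_iff_integrableAtFilter_atBot.mpr
      ⟨integrableAtFilter_atBot_of_mul_eq_add_integral_Iic (by norm_num)
        (integrableAtFilter_atBot_of_tendsto_div_exp (by norm_num) (by fun_prop)
          (tendsto_sq_mul_sq_div_exp hasymp)) henergy,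
        (hcont.pow 2).locallyIntegrable.locallyIntegrableOn _⟩
  have hIpos (s : ℝ) : 0 < ∫ σ in Iic s, deriv Ψ σ ^ 2 :=
    setIntegral_Iic_pos (hint s) (fun _ => sq_nonneg _) (hpos.mono fun _ h => pow_pos h 2)
  have hlow (s : ℝ) : 2 * ∫ σ in Iic s, deriv Ψ σ ^ 2 ≤ deriv Ψ s ^ 2 := by
    nlinarith [henergy s, mul_nonneg (sq_nonneg (Ψ s)) (sq_nonneg (1 - Ψ s / 2))]
  have hne (s : ℝ) : deriv Ψ s ≠ 0 := fun h => by
    nlinarith [hlow s, hIpos s, h]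
  obtain ⟨a, ha⟩ := hpos.exists
  have hdpos := hcont.pos_of_ne_zero hne ha
  have hK : 0 < √(2 * ∫ σ in Iic 0, deriv Ψ σ ^ 2) := Real.sqrt_pos.2 (by linarith [hIpos 0])
  have hgrowth (x : ℝ) (hx : 0 ≤ x) : √(2 * ∫ σ in Iic 0, deriv Ψ σ ^ 2) ≤ deriv Ψ x := by
    have hmono : ∫ σ in Iic 0, deriv Ψ σ ^ 2 ≤ ∫ σ in Iic x, deriv Ψ σ ^ 2 :=
      setIntegral_mono_set (hint x) (Eventually.of_forall fun _ => sq_nonneg _)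
        (Iic_subset_Iic.2 hx).eventuallyLE
    calc √(2 * ∫ σ in Iic 0, deriv Ψ σ ^ 2) ≤ √(deriv Ψ x ^ 2) :=
          Real.sqrt_le_sqrt (by linarith [hlow x])
      _ = deriv Ψ x := Real.sqrt_sq (hdpos x).le
  exact ⟨hne, strictMono_of_deriv_pos hdpos,
    exists_lt_of_le_deriv (hC2.differentiable (by norm_num)) hK hgrowth 1⟩
end

section
/- Let f : (0,∞) → (0,1) be a C³ solution of f'' = ((f² - 1)/r²)f + g₀²ρ²f with f' ≤ 0 on (0,∞), where ρ : (0,∞) → (0,∞) is C¹ with ρ' ≥ 0 and g₀ > 0. Then f' < 0 on (0,∞). -/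
open Real Set Filter Topology

theorem stmt8 (g₀ : ℝ) (hg : 0 < g₀) (f ρ : ℝ → ℝ)
    (hf : ContDiffOn ℝ 3 f (Ioi 0)) (hρ : ContDiffOn ℝ 1 ρ (Ioi 0))
    (hfrange : ∀ r > (0 : ℝ), 0 < f r ∧ f r < 1)
    (hρpos : ∀ r > (0 : ℝ), 0 < ρ r)
    (hODE : ∀ r > (0 : ℝ), deriv (deriv f) r =
      (((f r) ^ 2 - 1) / r ^ 2) * f r + g₀ ^ 2 * (ρ r) ^ 2 * f r)
    (hf' : ∀ r > (0 : ℝ), deriv f r ≤ 0)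
    (hρ' : ∀ r > (0 : ℝ), 0 ≤ deriv ρ r) :
    ∀ r > (0 : ℝ), deriv f r < 0 := by
  intro r₁ hr₁
  by_contra hne
  have heq : deriv f r₁ = 0 := le_antisymm (hf' r₁ hr₁) (not_lt.1 hne)
  have hO : IsOpen (Ioi (0:ℝ)) := isOpen_Ioi
  have hmem : Ioi (0:ℝ) ∈ 𝓝 r₁ := hO.mem_nhds hr₁
  have hg2 : ContDiffOn ℝ 2 (deriv f) (Ioi 0) := hf.deriv_of_isOpen hO (by norm_num)
  have hh1 : ContDiffOn ℝ 1 (deriv (deriv f)) (Ioi 0) := hg2.deriv_of_isOpen hO (by norm_num)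
  have hdf : ∀ x ∈ Ioi (0:ℝ), DifferentiableAt ℝ f x := fun x hx =>
    (hf.differentiableOn (by norm_num)).differentiableAt (hO.mem_nhds hx)
  have hdg : ∀ x ∈ Ioi (0:ℝ), DifferentiableAt ℝ (deriv f) x := fun x hx =>
    (hg2.differentiableOn (by norm_num)).differentiableAt (hO.mem_nhds hx)
  have hdh : ∀ x ∈ Ioi (0:ℝ), DifferentiableAt ℝ (deriv (deriv f)) x := fun x hx =>
    (hh1.differentiableOn (by norm_num)).differentiableAt (hO.mem_nhds hx)
  have hdρ : DifferentiableAt ℝ ρ r₁ :=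
    (hρ.differentiableOn (by norm_num)).differentiableAt hmem
  -- second derivative vanishes at r₁
  have hmax : IsLocalMax (deriv f) r₁ := by
    filter_upwards [hmem] with x hx
    rw [heq]; exact hf' x hx
  have hd2 : deriv (deriv f) r₁ = 0 := hmax.deriv_eq_zero
  -- derivative of the RHS at r₁
  have Hf : HasDerivAt f 0 r₁ := heq ▸ (hdf r₁ hr₁).hasDerivAt
  have Hρ : HasDerivAt ρ (deriv ρ r₁) r₁ := hdρ.hasDerivAt
  have Hnum : HasDerivAt (fun r => (f r)^2 - 1) (2 * f r₁ ^ 1 * 0) r₁ := (Hf.pow 2).sub_const 1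
  have Hden : HasDerivAt (fun r : ℝ => r^2) (2 * r₁ ^ 1 * 1) r₁ := (hasDerivAt_id r₁).pow 2
  have hr₁2 : (r₁ : ℝ)^2 ≠ 0 := pow_ne_zero 2 (ne_of_gt hr₁)
  have Hq := (Hnum.div Hden hr₁2).mul Hf
  have Hρ2 := (((Hρ.pow 2).const_mul (g₀^2)).mul Hf)
  have HF := Hq.add Hρ2
  set D := (2 * f r₁ ^ 1 * 0 * r₁ ^ 2 - (f r₁ ^ 2 - 1) * (2 * r₁ ^ 1 * 1)) / (r₁ ^ 2) ^ 2 * f r₁ +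
      (f r₁ ^ 2 - 1) / r₁ ^ 2 * 0 +
      (g₀ ^ 2 * (2 * ρ r₁ ^ 1 * deriv ρ r₁) * f r₁ + g₀ ^ 2 * ρ r₁ ^ 2 * 0) with hD
  have hFh : (deriv (deriv f)) =ᶠ[𝓝 r₁] fun r =>
      (((f r) ^ 2 - 1) / r ^ 2) * f r + g₀ ^ 2 * (ρ r) ^ 2 * f r := by
    filter_upwards [hmem] with x hx
    exact hODE x hx
  have Hh : HasDerivAt (deriv (deriv f)) D r₁ := HF.congr_of_eventuallyEq hFh
  -- D is positive
  obtain ⟨ha0, ha1⟩ := hfrange r₁ hr₁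
  have hDpos : 0 < D := by
    have h1 : 0 < (1 - f r₁ ^ 2) * (2 * r₁) / (r₁ ^ 2) ^ 2 * f r₁ := by
      apply mul_pos (div_pos _ (by positivity)) ha0
      apply mul_pos _ (by positivity)
      nlinarith
    have h2 : 0 ≤ g₀ ^ 2 * (2 * ρ r₁ ^ 1 * deriv ρ r₁) * f r₁ := by
      have := hρ' r₁ hr₁
      have := (hρpos r₁ hr₁).le
      positivity
    rw [hD]
    have : (2 * f r₁ ^ 1 * 0 * r₁ ^ 2 - (f r₁ ^ 2 - 1) * (2 * r₁ ^ 1 * 1)) / (r₁ ^ 2) ^ 2 * f r₁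
        = (1 - f r₁ ^ 2) * (2 * r₁) / (r₁ ^ 2) ^ 2 * f r₁ := by ring
    rw [this]
    linarith
  -- h = deriv (deriv f) is positive just right of r₁
  have hslope : Tendsto (slope (deriv (deriv f)) r₁) (𝓝[>] r₁) (𝓝 D) :=
    (hasDerivAt_iff_tendsto_slope.1 Hh).mono_left
      (nhdsWithin_mono r₁ (fun x hx => ne_of_gt hx))
  have hev : ∀ᶠ x in 𝓝[>] r₁, 0 < deriv (deriv f) x := by
    filter_upwards [hslope.eventually (lt_mem_nhds hDpos), self_mem_nhdsWithin] with x hs hx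
    have hx' : 0 < x - r₁ := sub_pos.2 hx
    have : slope (deriv (deriv f)) r₁ x = deriv (deriv f) x / (x - r₁) := by
      rw [slope_def_field, hd2]; ring
    rw [this] at hs
    exact (div_pos_iff.1 hs).resolve_right (fun h => absurd hx' (not_lt.2 h.2.le)) |>.1
  obtain ⟨u, hu, hsub⟩ := mem_nhdsGT_iff_exists_Ioo_subset.1 hev
  set r₂ := (r₁ + u) / 2 with hr₂def
  have hlt : r₁ < r₂ := by simp only [hr₂def]; linarith [mem_Ioi.1 hu]
  have hr₂u : r₂ < u := by simp only [hr₂def]; linarith [mem_Ioi.1 hu]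
  have hr₂pos : 0 < r₂ := lt_trans hr₁ hlt
  -- MVT on [r₁, r₂]
  have hcont : ContinuousOn (deriv f) (Icc r₁ r₂) :=
    (hg2.continuousOn).mono (fun x hx => lt_of_lt_of_le hr₁ hx.1)
  have hdiff : DifferentiableOn ℝ (deriv f) (Ioo r₁ r₂) :=
    fun x hx => ((hdg x (lt_trans hr₁ hx.1)).differentiableWithinAt)
  obtain ⟨c, hc, hceq⟩ := exists_deriv_eq_slope (deriv f) hlt hcont hdiff
  have hcpos : 0 < deriv (deriv f) c := hsub ⟨hc.1, lt_trans hc.2 hr₂u⟩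
  rw [hceq] at hcpos
  have : 0 < deriv f r₂ := by
    rw [heq] at hcpos
    have := div_pos_iff.1 hcpos
    rcases this with ⟨h, _⟩ | ⟨_, h2⟩
    · linarith
    · linarith [sub_pos.2 hlt]
  linarith [hf' r₂ hr₂pos]
end

section
/- Let ρ : (0,∞) → (0,ρ₀) be a C³ solution of ρ'' + (2/r)ρ' - (2f²/r²)ρ = λ(ρ² - ρ₀²)ρ with ρ' ≥ 0 on (0,∞), where f : (0,∞) → (0,1) is C¹ with f' < 0, and λ, ρ₀ > 0. Then ρ' > 0 on (0,∞). -/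
/-!
If `ρ'(r₀) = 0`, then `r₀` is a minimum of `ρ' ≥ 0`, so `ρ''(r₀) = 0` and the equation forces
`V(r₀) = 0`, where `V = 2f²/r² + λ(ρ² - ρ₀²)` is the potential in `ρ'' + (2/r)ρ' = Vρ`.
As `V'(r₀) = 4f(f' - f/r)/r² < 0`, the potential is negative just to the right of `r₀`, so
`(r²ρ')' = r²Vρ < 0` there and `r²ρ'` drops below its value `0` at `r₀`, contradicting `ρ' ≥ 0`.
-/

open Real Set Filter Topology

lemma eventually_neg_nhdsGT_of_deriv_neg {c : ℝ → ℝ} {a : ℝ} (hd : deriv c a < 0)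
    (ha : c a = 0) : ∀ᶠ x in 𝓝[>] a, c x < 0 := by
  filter_upwards [nhdsWithin_le_nhds (eventually_nhdsWithin_sign_eq_of_deriv_neg hd ha),
    self_mem_nhdsWithin] with x hx (hax : a < x)
  rwa [sign_neg (sub_neg.mpr hax), sign_eq_neg_one_iff] at hx

lemma eventually_lt_nhdsGT_of_deriv_neg {g : ℝ → ℝ} {a : ℝ} (hg : ContinuousAt g a)
    (hd : ∀ᶠ x in 𝓝[>] a, deriv g x < 0) : ∀ᶠ x in 𝓝[>] a, g x < g a := by
  obtain ⟨b, hab, hb⟩ := mem_nhdsGT_iff_exists_Ioo_subset.mp hd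
  filter_upwards [Ioo_mem_nhdsGT hab] with x hx
  have hcont : ContinuousOn g (Icc a x) := by
    intro y hy
    rcases hy.1.eq_or_lt with rfl | hay
    · exact hg.continuousWithinAt
    · exact (differentiableAt_of_deriv_ne_zero
        (hb ⟨hay, hy.2.trans_lt hx.2⟩).ne).continuousAt.continuousWithinAt
  refine strictAntiOn_of_deriv_neg (convex_Icc a x) hcont ?_ ⟨le_rfl, hx.1.le⟩
    ⟨hx.1.le, le_rfl⟩ hx.1
  rw [interior_Icc]
  exact fun y hy ↦ hb ⟨hy.1, hy.2.trans hx.2⟩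

noncomputable def radialPotential (lam ρ₀ : ℝ) (f ρ : ℝ → ℝ) (r : ℝ) : ℝ :=
  2 * f r ^ 2 / r ^ 2 + lam * (ρ r ^ 2 - ρ₀ ^ 2)

section RadialEquation

variable {lam ρ₀ : ℝ} {f ρ : ℝ → ℝ} {r : ℝ}

lemma hasDerivAt_sq_mul_deriv (hr : r ≠ 0)
    (hρ' : HasDerivAt (deriv ρ) (deriv (deriv ρ) r) r)
    (hODE : deriv (deriv ρ) r + (2 / r) * deriv ρ r
      - (2 * (f r) ^ 2 / r ^ 2) * ρ r = lam * ((ρ r) ^ 2 - ρ₀ ^ 2) * ρ r) :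
    HasDerivAt (fun x ↦ x ^ 2 * deriv ρ x) (r ^ 2 * (radialPotential lam ρ₀ f ρ r * ρ r)) r := by
  refine ((hasDerivAt_pow 2 r).mul hρ').congr_deriv ?_
  rw [radialPotential]
  field_simp at hODE ⊢
  linear_combination hODE

lemma radialPotential_eq_zero (hρ : ρ r ≠ 0) (hρ' : deriv ρ r = 0)
    (hρ'' : deriv (deriv ρ) r = 0)
    (hODE : deriv (deriv ρ) r + (2 / r) * deriv ρ r
      - (2 * (f r) ^ 2 / r ^ 2) * ρ r = lam * ((ρ r) ^ 2 - ρ₀ ^ 2) * ρ r) :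
    radialPotential lam ρ₀ f ρ r = 0 := by
  rw [hρ', hρ''] at hODE
  refine (mul_eq_zero.mp ?_).resolve_right hρ
  rw [radialPotential]
  linear_combination -hODE

lemma deriv_radialPotential_neg {f' : ℝ} (hr : 0 < r) (hf : HasDerivAt f f' r)
    (hρ : HasDerivAt ρ 0 r) (hfr : 0 < f r) (hf' : f' < 0) :
    deriv (radialPotential lam ρ₀ f ρ) r < 0 := by
  have hV : HasDerivAt (radialPotential lam ρ₀ f ρ) (4 * f r * (f' * r - f r) / r ^ 3) r := by
    have h := (((hf.fun_pow 2).fun_div (hasDerivAt_pow 2 r) (by positivity)).const_mul 2).add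
      (((hρ.fun_pow 2).sub_const (ρ₀ ^ 2)).const_mul lam)
    have hV_eq : radialPotential lam ρ₀ f ρ =
        fun x ↦ 2 * (f x ^ 2 / x ^ 2) + lam * (ρ x ^ 2 - ρ₀ ^ 2) := by
      funext x
      rw [radialPotential, mul_div_assoc]
    rw [hV_eq]
    refine h.congr_deriv ?_
    field_simp
    ring
  have hnum : f' * r - f r < 0 := sub_neg_of_lt ((mul_neg_of_neg_of_pos hf' hr).trans hfr)
  rw [hV.deriv]
  exact div_neg_of_neg_of_pos (mul_neg_of_pos_of_neg (by positivity) hnum) (by positivity)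

end RadialEquation

theorem stmt9_general (lam ρ₀ : ℝ) (f ρ : ℝ → ℝ)
    (hρ : ContDiffOn ℝ 3 ρ (Ioi 0)) (hf : ContDiffOn ℝ 1 f (Ioi 0))
    (hρrange : ∀ r > (0 : ℝ), 0 < ρ r ∧ ρ r < ρ₀)
    (hfrange : ∀ r > (0 : ℝ), 0 < f r ∧ f r < 1)
    (hf' : ∀ r > (0 : ℝ), deriv f r < 0)
    (hODE : ∀ r > (0 : ℝ), deriv (deriv ρ) r + (2 / r) * deriv ρ r
      - (2 * (f r) ^ 2 / r ^ 2) * ρ r = lam * ((ρ r) ^ 2 - ρ₀ ^ 2) * ρ r)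
    (hρ' : ∀ r > (0 : ℝ), 0 ≤ deriv ρ r) :
    ∀ r > (0 : ℝ), 0 < deriv ρ r := by
  have hρ'C2 : ContDiffOn ℝ 2 (deriv ρ) (Ioi 0) := hρ.deriv_of_isOpen isOpen_Ioi (by norm_num)
  have hρ'diff : ∀ x > (0 : ℝ), HasDerivAt (deriv ρ) (deriv (deriv ρ) x) x := fun x hx ↦
    ((hρ'C2.contDiffAt (Ioi_mem_nhds hx)).differentiableAt (by norm_num)).hasDerivAt
  intro r hr
  by_contra! hle
  have hρ'r : deriv ρ r = 0 := le_antisymm hle (hρ' r hr)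
  have hρ''r : deriv (deriv ρ) r = 0 := IsLocalMin.deriv_eq_zero <| by
    filter_upwards [Ioi_mem_nhds hr] with x hx
    exact hρ'r ▸ hρ' x hx
  have hV := radialPotential_eq_zero (hρrange r hr).1.ne' hρ'r hρ''r (hODE r hr)
  have hV' : deriv (radialPotential lam ρ₀ f ρ) r < 0 := by
    have hfd := (hf.contDiffAt (Ioi_mem_nhds hr)).differentiableAt one_ne_zero
    have hρd := (hρ.contDiffAt (Ioi_mem_nhds hr)).differentiableAt (by norm_num)
    exact deriv_radialPotential_neg hr hfd.hasDerivAt (hρ'r ▸ hρd.hasDerivAt)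
      (hfrange r hr).1 (hf' r hr)
  have hg' : ∀ᶠ x in 𝓝[>] r, deriv (fun x ↦ x ^ 2 * deriv ρ x) x < 0 := by
    filter_upwards [eventually_neg_nhdsGT_of_deriv_neg hV' hV, self_mem_nhdsWithin]
      with x hVx (hx : r < x)
    have hx0 : 0 < x := hr.trans hx
    rw [(hasDerivAt_sq_mul_deriv hx0.ne' (hρ'diff x hx0) (hODE x hx0)).deriv]
    exact mul_neg_of_pos_of_neg (by positivity) (mul_neg_of_neg_of_pos hVx (hρrange x hx0).1)
  have hcont : ContinuousAt (fun x ↦ x ^ 2 * deriv ρ x) r :=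
    (continuousAt_id.pow 2).mul (hρ'diff r hr).continuousAt
  obtain ⟨x, hgx, hx⟩ :=
    ((eventually_lt_nhdsGT_of_deriv_neg hcont hg').and self_mem_nhdsWithin).exists
  simp only [hρ'r, mul_zero] at hgx
  exact hgx.not_ge (mul_nonneg (sq_nonneg x) (hρ' x (hr.trans hx)))

theorem stmt9 (lam ρ₀ : ℝ) (hlam : 0 < lam) (hρ₀ : 0 < ρ₀) (f ρ : ℝ → ℝ)
    (hρ : ContDiffOn ℝ 3 ρ (Ioi 0)) (hf : ContDiffOn ℝ 1 f (Ioi 0))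
    (hρrange : ∀ r > (0 : ℝ), 0 < ρ r ∧ ρ r < ρ₀)
    (hfrange : ∀ r > (0 : ℝ), 0 < f r ∧ f r < 1)
    (hf' : ∀ r > (0 : ℝ), deriv f r < 0)
    (hODE : ∀ r > (0 : ℝ), deriv (deriv ρ) r + (2 / r) * deriv ρ r
      - (2 * (f r) ^ 2 / r ^ 2) * ρ r = lam * ((ρ r) ^ 2 - ρ₀ ^ 2) * ρ r)
    (hρ' : ∀ r > (0 : ℝ), 0 ≤ deriv ρ r) :
    ∀ r > (0 : ℝ), 0 < deriv ρ r :=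
  stmt9_general lam ρ₀ f ρ hρ hf hρrange hfrange hf' hODE hρ'
end

section
/- Let p : (0,∞) → ℝ be continuous with 0 < p(t) ≤ 1 for all t, and let y be a nontrivial C² solution of y'' + (1/t)y' + (1 − 9/(4t²) + 2(1 − p(t)²)/t²)y = 0 with y(t) ~ (1/3)√(2/π) t^{3/2} as t → 0⁺. If t₀ is the first positive zero of J_{3/2}, then y has a zero in (0, t₀], and moreover y attains strictly negative values on (0, t₁] for any t₁ > t₀ such that J_{3/2} < 0 on (t₀, t₁). -/
/-!
Put `u = √t y` and `S₁(t) = sin t / t - cos t = √(πt/2) J_{3/2}(t)`. Then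
`u'' + (q + 1/(4t²)) u = 0` with `q = 1 - 9/(4t²) + 2(1 - p²)/t²`, while
`S₁'' + (1 - 2/t²) S₁ = 0`, so the Wronskian `W = S₁' u - S₁ u'` has derivative
`2(1 - p²)/t² · S₁ u`. If `y` had no zero in `(0, t₀]` it would be positive there, `W` would be
nondecreasing, and `W ≤ W(t₀) = S₁'(t₀) u(t₀) < 0` on `(0, t₀)`. As `S₁ ≤ t²/2`, this gives
`(u / S₁)' = -W / S₁² ≥ 4 |W(t₀)| / t⁴`, which drives `u / S₁` below zero near `0`.

If moreover `y ≥ 0` on `(0, t₁]`, the zero found above is a local minimum, hence a double zero, and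
the energy `e^{Kt} (y² + y'²)`, nondecreasing for large `K`, forces `y` to vanish to its left,
contradicting `y > 0` near `0`.
-/

open Real Set Filter Topology

/-- The Riccati–Bessel function `S₁(t) = t j₁(t) = √(πt/2) J_{3/2}(t)`. -/
noncomputable def riccatiBessel₁ (t : ℝ) : ℝ := sin t / t - cos t

noncomputable def riccatiBessel₁' (t : ℝ) : ℝ := cos t / t - sin t / t ^ 2 + sin t

theorem hasDerivAt_riccatiBessel₁ {t : ℝ} (ht : t ≠ 0) :
    HasDerivAt riccatiBessel₁ (riccatiBessel₁' t) t := by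
  refine (((hasDerivAt_sin t).div (hasDerivAt_id t) ht).sub (hasDerivAt_cos t)).congr_deriv ?_
  simp only [riccatiBessel₁', id]
  field_simp
  ring

theorem hasDerivAt_riccatiBessel₁' {t : ℝ} (ht : t ≠ 0) :
    HasDerivAt riccatiBessel₁' (-(1 - 2 / t ^ 2) * riccatiBessel₁ t) t := by
  refine ((((hasDerivAt_cos t).div (hasDerivAt_id t) ht).sub
    ((hasDerivAt_sin t).div (hasDerivAt_pow 2 t) (pow_ne_zero 2 ht))).add
    (hasDerivAt_sin t)).congr_deriv ?_
  simp only [riccatiBessel₁, id]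
  field_simp
  ring

theorem riccatiBessel₁_le {t : ℝ} (ht : 0 < t) : riccatiBessel₁ t ≤ t ^ 2 / 2 := by
  have hsin : sin t / t ≤ 1 := (div_le_one ht).2 (sin_le ht.le)
  linarith [one_sub_sq_div_two_le_cos (x := t), riccatiBessel₁.eq_def t]

theorem riccatiBessel₁'_ne_zero {t : ℝ} (ht : t ≠ 0) (h : riccatiBessel₁ t = 0) :
    riccatiBessel₁' t ≠ 0 := by
  have hsin : sin t = t * cos t := by
    rw [riccatiBessel₁, sub_eq_zero, div_eq_iff ht] at h
    linarith
  have h' : riccatiBessel₁' t = sin t := by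
    rw [riccatiBessel₁', hsin]
    field_simp
    ring
  intro h0
  have hcos : cos t = 0 := (mul_eq_zero.1 (hsin.symm.trans (h'.symm.trans h0))).resolve_left ht
  have := sin_sq_add_cos_sq t
  rw [← h', h0, hcos] at this
  norm_num at this

theorem HasDerivAt.nonpos_of_pos_left {f : ℝ → ℝ} {f' a b : ℝ} (hf : HasDerivAt f f' b)
    (hab : a < b) (hpos : ∀ x ∈ Ioo a b, 0 < f x) (hb : f b = 0) : f' ≤ 0 := by
  have hslope : Tendsto (slope f b) (𝓝[<] b) (𝓝 f') :=
    (hasDerivWithinAt_iff_tendsto_slope' (s := Iio b) (lt_irrefl b)).1 hf.hasDerivWithinAt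
  refine le_of_tendsto hslope ?_
  filter_upwards [Ioo_mem_nhdsLT hab] with x hx
  rw [slope_def_field, hb, sub_zero]
  exact div_nonpos_of_nonneg_of_nonpos (hpos x hx).le (by linarith [hx.2])

theorem HasDerivAt.wronskian {u u' w w' : ℝ → ℝ} {u'' w'' t : ℝ}
    (hu : HasDerivAt u (u' t) t) (hu' : HasDerivAt u' u'' t)
    (hw : HasDerivAt w (w' t) t) (hw' : HasDerivAt w' w'' t) :
    HasDerivAt (fun s => w' s * u s - w s * u' s) (w'' * u t - w t * u'') t := by
  refine ((hw'.mul hu).sub (hw.mul hu')).congr_deriv ?_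
  ring

theorem hasDerivAt_sqrt_mul {y : ℝ → ℝ} {y' t : ℝ} (ht : 0 < t) (hy : HasDerivAt y y' t) :
    HasDerivAt (fun s => √s * y s) (y t / (2 * √t) + √t * y') t := by
  refine ((hasDerivAt_sqrt ht.ne').mul hy).congr_deriv ?_
  ring

theorem hasDerivAt_sqrt_mul_deriv {y y' : ℝ → ℝ} {y'' t : ℝ} (ht : 0 < t)
    (hy : HasDerivAt y (y' t) t) (hy' : HasDerivAt y' y'' t) :
    HasDerivAt (fun s => y s / (2 * √s) + √s * y' s)
      (√t * (y'' + y' t / t - y t / (4 * t ^ 2))) t := by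
  have hsqrt := hasDerivAt_sqrt ht.ne'
  have hst : 0 < √t := sqrt_pos.2 ht
  refine ((hy.div (hsqrt.const_mul 2) (by positivity)).add (hsqrt.mul hy')).congr_deriv ?_
  obtain ⟨s, hs, rfl⟩ : ∃ s, 0 < s ∧ s ^ 2 = t := ⟨√t, hst, sq_sqrt ht.le⟩
  rw [sqrt_sq hs.le]
  field_simp
  ring

/-- The Wronskian `S₁' u - S₁ u'` of `S₁` and `u = √s y`, where `y'` stands for the derivative
of `y`. -/
noncomputable def riccatiBessel₁Wronskian (y y' : ℝ → ℝ) (s : ℝ) : ℝ :=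
  riccatiBessel₁' s * (√s * y s) - riccatiBessel₁ s * (y s / (2 * √s) + √s * y' s)

theorem hasDerivAt_riccatiBessel₁Wronskian {y y' : ℝ → ℝ} {y'' q t : ℝ} (ht : 0 < t)
    (hy : HasDerivAt y (y' t) t) (hy' : HasDerivAt y' y'' t)
    (hode : y'' + 1 / t * y' t + q * y t = 0) :
    HasDerivAt (riccatiBessel₁Wronskian y y')
      ((q - (1 - 9 / (4 * t ^ 2))) * riccatiBessel₁ t * (√t * y t)) t := by
  refine (HasDerivAt.wronskian (hasDerivAt_sqrt_mul ht hy) (hasDerivAt_sqrt_mul_deriv ht hy hy')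
    (hasDerivAt_riccatiBessel₁ ht.ne') (hasDerivAt_riccatiBessel₁' ht.ne')).congr_deriv ?_
  have hy'' : y'' = -(1 / t * y' t) - q * y t := by linarith
  rw [hy'']
  field_simp
  ring

theorem hasDerivAt_sqrt_mul_div_riccatiBessel₁ {y y' : ℝ → ℝ} {t : ℝ} (ht : 0 < t)
    (hS : riccatiBessel₁ t ≠ 0) (hy : HasDerivAt y (y' t) t) :
    HasDerivAt (fun s => √s * y s / riccatiBessel₁ s)
      (-riccatiBessel₁Wronskian y y' t / riccatiBessel₁ t ^ 2) t := by
  refine ((hasDerivAt_sqrt_mul ht hy).div (hasDerivAt_riccatiBessel₁ ht.ne') hS).congr_deriv ?_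
  rw [riccatiBessel₁Wronskian]
  ring

theorem exists_neg_of_div_pow_four_le_deriv {h h' : ℝ → ℝ} {b k : ℝ} (hb : 0 < b) (hk : 0 < k)
    (hd : ∀ s ∈ Ioo 0 b, HasDerivAt h (h' s) s) (hle : ∀ s ∈ Ioo 0 b, k / s ^ 4 ≤ h' s) :
    ∃ s ∈ Ioo 0 b, h s < 0 := by
  set g : ℝ → ℝ := fun s => h s + k / 3 * s⁻¹ ^ 3
  have hg : ∀ s ∈ Ioo 0 b, HasDerivAt g (h' s - k / s ^ 4) s := fun s hs =>
    ((hd s hs).add (((hasDerivAt_inv hs.1.ne').pow 3).const_mul (k / 3))).congr_deriv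
      (by field_simp; ring)
  have hmono : MonotoneOn g (Ioo 0 b) := by
    refine monotoneOn_of_deriv_nonneg (convex_Ioo 0 b)
      (fun s hs => (hg s hs).continuousAt.continuousWithinAt) ?_ ?_ <;> rw [interior_Ioo]
    · exact fun s hs => (hg s hs).differentiableAt.differentiableWithinAt
    · exact fun s hs => (hg s hs).deriv ▸ sub_nonneg.2 (hle s hs)
  have hb2 : b / 2 ∈ Ioo 0 b := ⟨by linarith, by linarith⟩
  have hblow : Tendsto (fun s : ℝ => k / 3 * s⁻¹ ^ 3) (𝓝[>] 0) atTop :=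
    ((tendsto_pow_atTop three_ne_zero).comp tendsto_inv_nhdsGT_zero).const_mul_atTop (by positivity)
  obtain ⟨s, hbig, hs⟩ := ((hblow.eventually_gt_atTop (g (b / 2))).and
    (Ioo_mem_nhdsGT hb2.1)).exists
  refine ⟨s, ⟨hs.1, hs.2.trans hb2.2⟩, ?_⟩
  have := hmono ⟨hs.1, hs.2.trans hb2.2⟩ hb2 hs.2.le
  simp only [g] at this hbig
  linarith

theorem Filter.Tendsto.eventually_pos_of_div {f g : ℝ → ℝ} {l : Filter ℝ}
    (h : Tendsto (fun t => f t / g t) l (𝓝 1)) (hg : ∀ᶠ t in l, 0 < g t) :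
    ∀ᶠ t in l, 0 < f t := by
  filter_upwards [h.eventually_const_lt one_pos, hg] with t hfg hgt
  exact (div_pos_iff_of_pos_right hgt).1 hfg

theorem pos_of_eventually_pos_of_ne_zero {y : ℝ → ℝ} {b : ℝ} (hc : ContinuousOn y (Ioc 0 b))
    (h0 : ∀ᶠ t in 𝓝[>] 0, 0 < y t) (hne : ∀ t ∈ Ioc 0 b, y t ≠ 0) :
    ∀ t ∈ Ioc 0 b, 0 < y t := by
  intro t ht
  by_contra! hyt
  obtain ⟨a, hya, ha⟩ := (h0.and (Ioo_mem_nhdsGT ht.1)).exists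
  obtain ⟨z, hz, hyz⟩ := intermediate_value_Icc' ha.2.le
    (hc.mono fun x hx => ⟨ha.1.trans_le hx.1, hx.2.trans ht.2⟩) ⟨hyt, hya.le⟩
  exact hne z ⟨ha.1.trans_le hz.1, hz.2.trans ht.2⟩ hyz

theorem exists_zero_of_riccatiBessel₁_comparison {y y' y'' q : ℝ → ℝ} {b : ℝ} (hb : 0 < b)
    (hy : ∀ t ∈ Ioc 0 b, HasDerivAt y (y' t) t) (hy' : ∀ t ∈ Ioc 0 b, HasDerivAt y' (y'' t) t)
    (hode : ∀ t ∈ Ioc 0 b, y'' t + 1 / t * y' t + q t * y t = 0)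
    (hq : ∀ t ∈ Ioc 0 b, 1 - 9 / (4 * t ^ 2) ≤ q t)
    (hS : ∀ t ∈ Ioo 0 b, 0 < riccatiBessel₁ t) (hSb : riccatiBessel₁ b = 0)
    (hy0 : ∀ᶠ t in 𝓝[>] 0, 0 < y t) :
    ∃ t ∈ Ioc 0 b, y t = 0 := by
  by_contra! hne
  have hpos := pos_of_eventually_pos_of_ne_zero
    (fun t ht => (hy t ht).continuousAt.continuousWithinAt) hy0 hne
  set W := riccatiBessel₁Wronskian y y' with hW_def
  have hW : ∀ t ∈ Ioc 0 b, HasDerivAt W _ t := fun t ht =>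
    hasDerivAt_riccatiBessel₁Wronskian ht.1 (hy t ht) (hy' t ht) (hode t ht)
  have hmono : MonotoneOn W (Ioc 0 b) := by
    refine monotoneOn_of_deriv_nonneg (convex_Ioc 0 b)
      (fun t ht => (hW t ht).continuousAt.continuousWithinAt) ?_ ?_ <;> rw [interior_Ioc]
    · exact fun t ht => (hW t (Ioo_subset_Ioc_self ht)).differentiableAt.differentiableWithinAt
    · intro t ht
      rw [(hW t (Ioo_subset_Ioc_self ht)).deriv]
      have hyt := hpos t (Ioo_subset_Ioc_self ht)
      have hSt := hS t ht
      exact mul_nonneg (mul_nonneg (sub_nonneg.2 (hq t (Ioo_subset_Ioc_self ht))) hSt.le)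
        (mul_nonneg (sqrt_nonneg t) hyt.le)
  have hbmem : b ∈ Ioc 0 b := ⟨hb, le_rfl⟩
  have hS'b : riccatiBessel₁' b < 0 :=
    lt_of_le_of_ne ((hasDerivAt_riccatiBessel₁ hb.ne').nonpos_of_pos_left hb hS hSb)
      (riccatiBessel₁'_ne_zero hb.ne' hSb)
  have hWb : W b < 0 := by
    rw [hW_def, riccatiBessel₁Wronskian, hSb, zero_mul, sub_zero]
    exact mul_neg_of_neg_of_pos hS'b (mul_pos (sqrt_pos.2 hb) (hpos b hbmem))
  have hderiv_ge : ∀ t ∈ Ioo 0 b, -4 * W b / t ^ 4 ≤ -W t / riccatiBessel₁ t ^ 2 := by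
    intro t ht
    have hSt := hS t ht
    have hWt := hmono (Ioo_subset_Ioc_self ht) hbmem ht.2.le
    have hSle := riccatiBessel₁_le ht.1
    calc -4 * W b / t ^ 4 = -W b / (t ^ 2 / 2) ^ 2 := by field_simp; ring
      _ ≤ -W t / riccatiBessel₁ t ^ 2 := by gcongr; linarith
  obtain ⟨s, hs, hneg⟩ := exists_neg_of_div_pow_four_le_deriv hb (by linarith)
    (fun t ht => hasDerivAt_sqrt_mul_div_riccatiBessel₁ ht.1 (hS t ht).ne'
      (hy t (Ioo_subset_Ioc_self ht))) hderiv_ge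
  exact (div_nonneg (mul_nonneg (sqrt_nonneg s) (hpos s (Ioo_subset_Ioc_self hs)).le)
    (hS s hs).le).not_gt hneg

theorem eq_zero_of_eq_zero_of_deriv_eq_zero_right {y y' y'' α β : ℝ → ℝ} {a b A B : ℝ}
    (hab : a ≤ b) (hy : ∀ t ∈ Icc a b, HasDerivAt y (y' t) t)
    (hy' : ∀ t ∈ Icc a b, HasDerivAt y' (y'' t) t)
    (hode : ∀ t ∈ Icc a b, y'' t = α t * y' t + β t * y t)
    (hα : ∀ t ∈ Icc a b, |α t| ≤ A) (hβ : ∀ t ∈ Icc a b, |β t| ≤ B)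
    (hyb : y b = 0) (hy'b : y' b = 0) : y a = 0 := by
  set K := 1 + 2 * A + B
  set G : ℝ → ℝ := fun t => exp (K * t) * (y t ^ 2 + y' t ^ 2)
  have hG : ∀ t ∈ Icc a b, HasDerivAt G
      (exp (K * t) * (K * (y t ^ 2 + y' t ^ 2) + 2 * y t * y' t + 2 * y' t * y'' t)) t :=
    fun t ht => ((((hasDerivAt_id t).const_mul K).exp).mul
      (((hy t ht).fun_pow 2).add ((hy' t ht).fun_pow 2))).congr_deriv
        (by simp only [id, Pi.add_apply]; ring)
  have hG' : ∀ t ∈ Icc a b,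
      0 ≤ K * (y t ^ 2 + y' t ^ 2) + 2 * y t * y' t + 2 * y' t * y'' t := by
    intro t ht
    rw [hode t ht]
    obtain ⟨hα₁, hα₂⟩ := abs_le.1 (hα t ht)
    have hyy' : |2 * y t * y' t| ≤ y t ^ 2 + y' t ^ 2 := by
      rw [abs_le]; constructor <;> nlinarith [sq_nonneg (y t + y' t), sq_nonneg (y t - y' t)]
    have hβyy' : |β t * (2 * y t * y' t)| ≤ B * (y t ^ 2 + y' t ^ 2) := by
      rw [abs_mul]
      exact mul_le_mul (hβ t ht) hyy' (abs_nonneg _) ((abs_nonneg _).trans (hβ t ht))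
    nlinarith [abs_le.1 hβyy', abs_le.1 hyy', sq_nonneg (y' t)]
  have hmono : MonotoneOn G (Icc a b) := by
    refine monotoneOn_of_deriv_nonneg (convex_Icc a b)
      (fun t ht => (hG t ht).continuousAt.continuousWithinAt) ?_ ?_ <;> rw [interior_Icc]
    · exact fun t ht => (hG t (Ioo_subset_Icc_self ht)).differentiableAt.differentiableWithinAt
    · exact fun t ht => (hG t (Ioo_subset_Icc_self ht)).deriv ▸
        mul_nonneg (exp_pos _).le (hG' t (Ioo_subset_Icc_self ht))
  have hGa := hmono ⟨le_rfl, hab⟩ ⟨hab, le_rfl⟩ hab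
  simp only [G, hyb, hy'b, zero_pow two_ne_zero, add_zero, mul_zero] at hGa
  nlinarith [nonpos_of_mul_nonpos_right hGa (exp_pos _), sq_nonneg (y a), sq_nonneg (y' a)]

theorem abs_besselCoeff_le {a t q : ℝ} (ha : 0 < a) (hat : a ≤ t) (hq : q ^ 2 ≤ 1) :
    |1 - 9 / (4 * t ^ 2) + 2 * (1 - q ^ 2) / t ^ 2| ≤ 1 + 5 / a ^ 2 := by
  have ht : 0 < t := ha.trans_le hat
  have hr : 1 / t ^ 2 ≤ 1 / a ^ 2 := by gcongr
  have hr₀ : 0 < 1 / t ^ 2 := by positivity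
  have hexpr : 1 - 9 / (4 * t ^ 2) + 2 * (1 - q ^ 2) / t ^ 2
      = 1 - (9 / 4) * (1 / t ^ 2) + 2 * (1 - q ^ 2) * (1 / t ^ 2) := by ring
  rw [hexpr, abs_le, div_eq_mul_one_div 5]
  constructor <;> nlinarith [sq_nonneg q]

theorem eq_zero_of_besselEq_of_eq_zero_right {p y y' y'' : ℝ → ℝ} {a b : ℝ} (ha : 0 < a)
    (hab : a ≤ b) (hp : ∀ t ∈ Icc a b, p t ^ 2 ≤ 1)
    (hy : ∀ t ∈ Icc a b, HasDerivAt y (y' t) t) (hy' : ∀ t ∈ Icc a b, HasDerivAt y' (y'' t) t)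
    (hode : ∀ t ∈ Icc a b,
      y'' t + 1 / t * y' t + (1 - 9 / (4 * t ^ 2) + 2 * (1 - p t ^ 2) / t ^ 2) * y t = 0)
    (hyb : y b = 0) (hy'b : y' b = 0) : y a = 0 := by
  have hpos : ∀ t ∈ Icc a b, 0 < t := fun t ht => ha.trans_le ht.1
  refine eq_zero_of_eq_zero_of_deriv_eq_zero_right (α := fun t => -(1 / t))
    (β := fun t => -(1 - 9 / (4 * t ^ 2) + 2 * (1 - p t ^ 2) / t ^ 2)) (A := 1 / a)
    (B := 1 + 5 / a ^ 2) hab hy hy' (fun t ht => by linarith [hode t ht]) (fun t ht => ?_)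
    (fun t ht => (abs_neg _).trans_le (abs_besselCoeff_le ha ht.1 (hp t ht))) hyb hy'b
  rw [abs_neg, abs_of_pos (one_div_pos.2 (hpos t ht))]
  exact one_div_le_one_div_of_le ha ht.1

theorem ContDiffOn.hasDerivAt_deriv_deriv {y : ℝ → ℝ} {s : Set ℝ} {t : ℝ}
    (hy : ContDiffOn ℝ 2 y s) (hs : IsOpen s) (ht : t ∈ s) :
    HasDerivAt (deriv y) (deriv (deriv y) t) t :=
  (((hy.deriv_of_isOpen hs (by norm_num)).differentiableOn one_ne_zero).differentiableAt
    (hs.mem_nhds ht)).hasDerivAt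

theorem stmt12_general (p y : ℝ → ℝ)
    (hprange : ∀ t > (0 : ℝ), 0 < p t ∧ p t ≤ 1)
    (hy : ContDiffOn ℝ 2 y (Ioi 0))
    (hODE : ∀ t > (0 : ℝ), deriv (deriv y) t + (1 / t) * deriv y t
      + (1 - 9 / (4 * t ^ 2) + 2 * (1 - (p t) ^ 2) / t ^ 2) * y t = 0)
    (hasymp : Tendsto (fun t => y t / ((1 / 3) * Real.sqrt (2 / π) * t ^ ((3 : ℝ) / 2)))
      (nhdsWithin 0 (Ioi 0)) (nhds 1))
    (J : ℝ → ℝ)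
    (hJ : J = fun t => Real.sqrt (2 / (π * t)) * (Real.sin t / t - Real.cos t))
    (t₀ t₁ : ℝ) (ht₀ : 0 < t₀) (hJt₀ : J t₀ = 0)
    (hJpos : ∀ t ∈ Ioo 0 t₀, 0 < J t)
    (ht₁ : t₀ < t₁) :
    (∃ t ∈ Ioc 0 t₀, y t = 0) ∧ (∃ t ∈ Ioc 0 t₁, y t < 0) := by
  subst hJ
  have hp : ∀ t > (0 : ℝ), p t ^ 2 ≤ 1 := fun t ht =>
    pow_le_one₀ (hprange t ht).1.le (hprange t ht).2
  have hy₁ : ∀ t > (0 : ℝ), HasDerivAt y (deriv y t) t := fun t ht =>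
    ((hy.contDiffAt (Ioi_mem_nhds ht)).differentiableAt two_ne_zero).hasDerivAt
  have hy₂ : ∀ t > (0 : ℝ), HasDerivAt (deriv y) (deriv (deriv y) t) t := fun t ht =>
    hy.hasDerivAt_deriv_deriv isOpen_Ioi ht
  have hy₀ : ∀ᶠ t in 𝓝[>] 0, 0 < y t := hasymp.eventually_pos_of_div <| by
    filter_upwards [self_mem_nhdsWithin] with t (ht : 0 < t)
    have := rpow_pos_of_pos ht ((3 : ℝ) / 2)
    have : 0 < √(2 / π) := sqrt_pos.2 (by positivity)
    positivity
  have hS : ∀ t ∈ Ioo 0 t₀, 0 < riccatiBessel₁ t := fun t ht =>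
    pos_of_mul_pos_right (hJpos t ht) (sqrt_nonneg _)
  have hSt₀ : riccatiBessel₁ t₀ = 0 :=
    (mul_eq_zero.1 hJt₀).resolve_left (sqrt_ne_zero'.2 (by positivity))
  obtain ⟨t, ht, hyt⟩ := exists_zero_of_riccatiBessel₁_comparison ht₀
    (fun t ht => hy₁ t ht.1) (fun t ht => hy₂ t ht.1) (fun t ht => hODE t ht.1)
    (fun t ht => le_add_of_nonneg_right (div_nonneg (by linarith [hp t ht.1]) (sq_nonneg t)))
    hS hSt₀ hy₀
  refine ⟨⟨t, ht, hyt⟩, ?_⟩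
  by_contra! hnonneg
  have hmin : IsLocalMin y t := by
    filter_upwards [Ioo_mem_nhds ht.1 (ht.2.trans_lt ht₁)] with s hs
    exact hyt ▸ hnonneg s ⟨hs.1, hs.2.le⟩
  obtain ⟨a, hya, ha⟩ := (hy₀.and (Ioo_mem_nhdsGT ht.1)).exists
  have ha₀ : ∀ s ∈ Icc a t, 0 < s := fun s hs => ha.1.trans_le hs.1
  exact hya.ne' (eq_zero_of_besselEq_of_eq_zero_right ha.1 ha.2.le (fun s hs => hp s (ha₀ s hs))
    (fun s hs => hy₁ s (ha₀ s hs)) (fun s hs => hy₂ s (ha₀ s hs))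
    (fun s hs => hODE s (ha₀ s hs)) hyt hmin.deriv_eq_zero)

theorem stmt12 (p y : ℝ → ℝ) (hp : ContinuousOn p (Ioi 0))
    (hprange : ∀ t > (0 : ℝ), 0 < p t ∧ p t ≤ 1)
    (hy : ContDiffOn ℝ 2 y (Ioi 0))
    (hODE : ∀ t > (0 : ℝ), deriv (deriv y) t + (1 / t) * deriv y t
      + (1 - 9 / (4 * t ^ 2) + 2 * (1 - (p t) ^ 2) / t ^ 2) * y t = 0)
    (hasymp : Tendsto (fun t => y t / ((1 / 3) * Real.sqrt (2 / π) * t ^ ((3 : ℝ) / 2)))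
      (nhdsWithin 0 (Ioi 0)) (nhds 1))
    (J : ℝ → ℝ)
    (hJ : J = fun t => Real.sqrt (2 / (π * t)) * (Real.sin t / t - Real.cos t))
    (t₀ t₁ : ℝ) (ht₀ : 0 < t₀) (hJt₀ : J t₀ = 0)
    (hJpos : ∀ t ∈ Ioo 0 t₀, 0 < J t)
    (ht₁ : t₀ < t₁) (hJneg : ∀ t ∈ Ioo t₀ t₁, J t < 0) :
    (∃ t ∈ Ioc 0 t₀, y t = 0) ∧ (∃ t ∈ Ioc 0 t₁, y t < 0) :=
  stmt12_general p y hprange hy hODE hasymp J hJ t₀ t₁ ht₀ hJt₀ hJpos ht₁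
end

section
/- For any α, β ∈ ℝ and g₀, λ, ρ₀ > 0, there exists ε > 0 and a unique C² solution (f, ρ) of the system f'' − ((f²−1)/r²)f = g₀²ρ²f, ρ'' + (2/r)ρ' − (2f²/r²)ρ = λ(ρ² − ρ₀²)ρ on (0, ε) such that (f(r) − 1 + αr²)/r² → 0 and (ρ(r) − βr)/r → 0 as r → 0⁺. -/
/-!
Writing `f = 1 + r² P` and `ρ = r Q`, the system becomes `y'' + (4 / r) y' = N (r, y)` for
`y = (P, Q)` with a polynomial `N`, and the prescribed behaviour at `0` becomes
`y (0⁺) = (-α, β)`. The solutions of `u'' + (4 / r) u' = Φ` that have a limit `c` at `0⁺` are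
exactly `c + ∫₀ʳ t⁻⁴ ∫₀ᵗ s⁴ Φ s ds dt`: the other homogeneous solution `r⁻³` is excluded by the
limit. This Volterra operator has a kernel bounded by `s`, so the integral equation has a
solution near `0` by Banach's fixed point theorem, and any two solutions agree by a Gronwall
argument.
-/

open Real Set Filter

open Topology MeasureTheory

noncomputable section

theorem HasDerivAt.fst {F G : Type*} [NormedAddCommGroup F] [NormedSpace ℝ F]
    [NormedAddCommGroup G] [NormedSpace ℝ G] {y : ℝ → F × G} {y' : F × G} {x : ℝ}
    (h : HasDerivAt y y' x) : HasDerivAt (fun t => (y t).1) y'.1 x := by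
  simpa using h.hasFDerivAt.fst.hasDerivAt

theorem HasDerivAt.snd {F G : Type*} [NormedAddCommGroup F] [NormedSpace ℝ F]
    [NormedAddCommGroup G] [NormedSpace ℝ G] {y : ℝ → F × G} {y' : F × G} {x : ℝ}
    (h : HasDerivAt y y' x) : HasDerivAt (fun t => (y t).2) y'.2 x := by
  simpa using h.hasFDerivAt.snd.hasDerivAt

theorem exists_eqOn_const_of_hasDerivAt_zero {F : Type*} [NormedAddCommGroup F] [NormedSpace ℝ F]
    {f : ℝ → F} {a b : ℝ} (hf : ∀ x ∈ Ioo a b, HasDerivAt f 0 x) : ∃ C, ∀ x ∈ Ioo a b, f x = C :=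
  isOpen_Ioo.exists_is_const_of_deriv_eq_zero isPreconnected_Ioo
    (fun x hx => (hf x hx).differentiableAt.differentiableWithinAt) fun x hx => (hf x hx).deriv

theorem deriv_deriv_eq_of_hasDerivAt {u u' : ℝ → ℝ} {u'' r : ℝ} {s : Set ℝ} (hs : IsOpen s)
    (hu : ∀ x ∈ s, HasDerivAt u (u' x) x) (hu' : HasDerivAt u' u'' r) (hr : r ∈ s) :
    deriv (deriv u) r = u'' := by
  have h : deriv u =ᶠ[𝓝 r] u' := eventually_of_mem (hs.mem_nhds hr) fun x hx => (hu x hx).deriv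
  rw [h.deriv_eq, hu'.deriv]

theorem ContDiffOn.hasDerivAt_deriv {F : Type*} [NormedAddCommGroup F] [NormedSpace ℝ F]
    {u : ℝ → F} {s : Set ℝ} {x : ℝ} (hu : ContDiffOn ℝ 1 u s) (hs : IsOpen s) (hx : x ∈ s) :
    HasDerivAt u (deriv u x) x :=
  ((hu.differentiableOn one_ne_zero).differentiableAt (hs.mem_nhds hx)).hasDerivAt

theorem contDiffOn_two_of_hasDerivAt {F : Type*} [NormedAddCommGroup F] [NormedSpace ℝ F]
    {u u' u'' : ℝ → F} {s : Set ℝ} (hs : IsOpen s) (hu : ∀ x ∈ s, HasDerivAt u (u' x) x)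
    (hu' : ∀ x ∈ s, HasDerivAt u' (u'' x) x) (hu'' : ContinuousOn u'' s) :
    ContDiffOn ℝ 2 u s := by
  have hderiv : EqOn (deriv u) u' s := fun x hx => (hu x hx).deriv
  have hderiv' : EqOn (deriv u') u'' s := fun x hx => (hu' x hx).deriv
  rw [show (2 : WithTop ℕ∞) = 1 + 1 from rfl, contDiffOn_succ_iff_deriv_of_isOpen hs]
  refine ⟨fun x hx => (hu x hx).differentiableAt.differentiableWithinAt, by simp,
    ContDiffOn.congr ?_ hderiv⟩
  rw [show (1 : WithTop ℕ∞) = 0 + 1 from rfl, contDiffOn_succ_iff_deriv_of_isOpen hs]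
  exact ⟨fun x hx => (hu' x hx).differentiableAt.differentiableWithinAt, by simp,
    contDiffOn_zero.mpr (hu''.congr hderiv')⟩

theorem LipschitzOnWith.norm_sub_le_of_prodMk {X F G : Type*} [PseudoMetricSpace X]
    [SeminormedAddCommGroup F] [SeminormedAddCommGroup G] {N : X × F → G} {K : NNReal}
    {S : Set (X × F)} (h : LipschitzOnWith K N S) {s : X} {y y' : F} (hy : (s, y) ∈ S)
    (hy' : (s, y') ∈ S) : ‖N (s, y) - N (s, y')‖ ≤ K * ‖y - y'‖ := by
  simpa [Prod.dist_eq, dist_eq_norm] using h.dist_le_mul _ hy _ hy'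

section Radial

variable {E : Type*} [NormedAddCommGroup E] [NormedSpace ℝ E]

def momentIntegral (Φ : ℝ → E) (k : ℕ) (r : ℝ) : E := ∫ s in (0 : ℝ)..r, s ^ k • Φ s

/-- `c + ∫₀ʳ t⁻⁴ ∫₀ᵗ s⁴ Φ s ds dt`, integrated by parts. -/
def radialSolution (c : E) (Φ : ℝ → E) (r : ℝ) : E :=
  c + (3 : ℝ)⁻¹ • (momentIntegral Φ 1 r - (r ^ 3)⁻¹ • momentIntegral Φ 4 r)

def radialDeriv (Φ : ℝ → E) (r : ℝ) : E := (r ^ 4)⁻¹ • momentIntegral Φ 4 r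

@[simp]
theorem radialSolution_zero (c : E) (Φ : ℝ → E) : radialSolution c Φ 0 = c := by
  simp [radialSolution, momentIntegral]

@[simp]
theorem radialSolution_const_zero (c : E) : radialSolution c (fun _ => (0 : E)) = fun _ => c := by
  ext r
  simp [radialSolution, momentIntegral]

variable {Φ Ψ : ℝ → E} {b r : ℝ}

theorem norm_momentIntegral_le {D : ℝ → E} {ξ : ℝ → ℝ} (k : ℕ) (hr : 0 ≤ r)
    (hξ : ContinuousOn ξ (Icc 0 r)) (h : ∀ s ∈ Icc 0 r, ‖D s‖ ≤ ξ s) :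
    ‖momentIntegral D (k + 1) r‖ ≤ r ^ k * ∫ s in (0 : ℝ)..r, s * ξ s := by
  rw [← intervalIntegral.integral_const_mul]
  refine intervalIntegral.norm_integral_le_of_norm_le hr (ae_of_all _ fun s hs => ?_) ?_
  · have hs' : s ∈ Icc 0 r := Ioc_subset_Icc_self hs
    rw [norm_smul, norm_pow, Real.norm_of_nonneg hs'.1, pow_succ, mul_assoc]
    exact mul_le_mul (pow_le_pow_left₀ hs'.1 hs'.2 k)
      (mul_le_mul_of_nonneg_left (h s hs') hs'.1) (mul_nonneg hs'.1 (norm_nonneg _))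
      (pow_nonneg hr k)
  · refine ContinuousOn.intervalIntegrable ?_
    rw [uIcc_of_le hr]
    fun_prop

theorem norm_radialSolution_sub_le {ξ : ℝ → ℝ} (c : E) (hr : 0 ≤ r)
    (hΦ : ContinuousOn Φ (Icc 0 r)) (hΨ : ContinuousOn Ψ (Icc 0 r))
    (hξ : ContinuousOn ξ (Icc 0 r)) (h : ∀ s ∈ Icc 0 r, ‖Φ s - Ψ s‖ ≤ ξ s) :
    ‖radialSolution c Φ r - radialSolution c Ψ r‖ ≤ ∫ s in (0 : ℝ)..r, s * ξ s := by
  have hint : ∀ k, IntervalIntegrable (fun s => s ^ k • Φ s) volume 0 r ∧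
      IntervalIntegrable (fun s => s ^ k • Ψ s) volume 0 r := fun k => by
    constructor <;> refine ContinuousOn.intervalIntegrable ?_ <;> rw [uIcc_of_le hr] <;> fun_prop
  have hsub : ∀ k, momentIntegral Φ k r - momentIntegral Ψ k r = momentIntegral (Φ - Ψ) k r :=
    fun k => by
      simp only [momentIntegral, ← intervalIntegral.integral_sub (hint k).1 (hint k).2,
        Pi.sub_apply, smul_sub]
  have h1 := norm_momentIntegral_le (D := Φ - Ψ) 0 hr hξ h
  have h4 := norm_momentIntegral_le (D := Φ - Ψ) 3 hr hξ h
  have hI : 0 ≤ ∫ s in (0 : ℝ)..r, s * ξ s := intervalIntegral.integral_nonneg hr fun s hs =>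
    mul_nonneg hs.1 ((norm_nonneg _).trans (h s hs))
  have hr3 : (r ^ 3)⁻¹ * r ^ 3 ≤ 1 := by
    rcases hr.eq_or_lt with rfl | hr
    · norm_num
    · rw [inv_mul_cancel₀ (by positivity)]
  have : radialSolution c Φ r - radialSolution c Ψ r =
      (3 : ℝ)⁻¹ • (momentIntegral (Φ - Ψ) 1 r - (r ^ 3)⁻¹ • momentIntegral (Φ - Ψ) 4 r) := by
    rw [← hsub, ← hsub, radialSolution, radialSolution]
    module
  rw [this, norm_smul, Real.norm_of_nonneg (by norm_num)]
  calc (3 : ℝ)⁻¹ * ‖momentIntegral (Φ - Ψ) 1 r - (r ^ 3)⁻¹ • momentIntegral (Φ - Ψ) 4 r‖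
      ≤ (3 : ℝ)⁻¹ * (‖momentIntegral (Φ - Ψ) 1 r‖
          + (r ^ 3)⁻¹ * ‖momentIntegral (Φ - Ψ) 4 r‖) := by
        gcongr
        refine (norm_sub_le _ _).trans_eq ?_
        rw [norm_smul, Real.norm_of_nonneg (by positivity)]
    _ ≤ (3 : ℝ)⁻¹ * ((∫ s in (0 : ℝ)..r, s * ξ s)
          + (r ^ 3)⁻¹ * (r ^ 3 * ∫ s in (0 : ℝ)..r, s * ξ s)) := by
        rw [pow_zero, one_mul] at h1
        gcongr ?_ * (?_ + ?_ * ?_)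
    _ ≤ ∫ s in (0 : ℝ)..r, s * ξ s := by
        have := mul_le_mul_of_nonneg_right hr3 hI
        rw [mul_assoc, one_mul] at this
        linarith

theorem norm_radialSolution_sub_self_le {M : ℝ} (c : E) (hr : 0 ≤ r)
    (hΦ : ContinuousOn Φ (Icc 0 r)) (hM : ∀ s ∈ Icc 0 r, ‖Φ s‖ ≤ M) :
    ‖radialSolution c Φ r - c‖ ≤ M * r ^ 2 / 2 := by
  have h := norm_radialSolution_sub_le (Ψ := fun _ => 0) (ξ := fun _ => M) c hr hΦ
    continuousOn_const continuousOn_const (by simpa using hM)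
  rwa [radialSolution_const_zero, intervalIntegral.integral_mul_const, integral_id,
    zero_pow two_ne_zero, sub_zero, div_mul_eq_mul_div, mul_comm] at h

/- The solutions of `v'' + (4 / r) v' = 0` on `(0, b)` are `D + r⁻³ C`, and only `0` tends to `0`
at `0⁺`. -/
theorem eqOn_zero_of_radial_homogeneous {v v' : ℝ → E}
    (hv : ∀ r ∈ Ioo 0 b, HasDerivAt v (v' r) r)
    (hv' : ∀ r ∈ Ioo 0 b, HasDerivAt v' (-(4 / r) • v' r) r)
    (hlim : Tendsto v (𝓝[>] 0) (𝓝 0)) : EqOn v 0 (Ioo 0 b) := by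
  obtain ⟨C, hC⟩ : ∃ C, ∀ r ∈ Ioo 0 b, r ^ 4 • v' r = C := by
    refine exists_eqOn_const_of_hasDerivAt_zero fun r hr => ?_
    refine ((hasDerivAt_pow 4 r).smul (hv' r hr)).congr_deriv ?_
    have := hr.1.ne'
    match_scalars
    field_simp
    ring
  obtain ⟨D, hD⟩ : ∃ D, ∀ r ∈ Ioo 0 b, v r + (3 * r ^ 3)⁻¹ • C = D := by
    refine exists_eqOn_const_of_hasDerivAt_zero fun r hr => ?_
    have hr0 := hr.1.ne'
    refine ((hv r hr).add ((((hasDerivAt_pow 3 r).const_mul 3).inv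
      (by positivity)).smul_const C)).congr_deriv ?_
    rw [← hC r hr]
    match_scalars
    field_simp
    ring
  intro r hr
  have hb : Ioo 0 b ∈ 𝓝[>] (0 : ℝ) := Ioo_mem_nhdsGT (hr.1.trans hr.2)
  have hDlim : Tendsto (fun t : ℝ => (3 * t ^ 3)⁻¹ • C) (𝓝[>] 0) (𝓝 (D - 0)) :=
    (tendsto_const_nhds.sub hlim).congr' (eventually_of_mem hb fun t ht => by
      rw [← hD t ht, add_sub_cancel_left])
  have hC0 : C = 0 := by
    have hcube : Tendsto (fun t : ℝ => 3 * t ^ 3) (𝓝[>] 0) (𝓝 0) := by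
      apply tendsto_nhdsWithin_of_tendsto_nhds
      simpa using ((continuous_pow 3).const_mul (3 : ℝ)).tendsto (0 : ℝ)
    have h := hcube.smul hDlim
    rw [zero_smul] at h
    refine tendsto_nhds_unique (tendsto_const_nhds.congr' ?_) h
    filter_upwards [self_mem_nhdsWithin] with t (ht : 0 < t)
    rw [smul_smul, mul_inv_cancel₀ (by positivity), one_smul]
  have hvD : ∀ t ∈ Ioo 0 b, v t = D := fun t ht => by simpa [hC0] using hD t ht
  have hD0 : D = 0 := tendsto_nhds_unique
    (tendsto_const_nhds.congr' (eventually_of_mem hb fun t ht => (hvD t ht).symm)) hlim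
  rw [hvD r hr, hD0, Pi.zero_apply]

variable [CompleteSpace E]

theorem hasDerivAt_momentIntegral (hΦ : ContinuousOn Φ (Ico 0 b)) (k : ℕ) (hr : r ∈ Ioo 0 b) :
    HasDerivAt (momentIntegral Φ k) (r ^ k • Φ r) r := by
  have hcont : ContinuousOn (fun s => s ^ k • Φ s) (Ioo 0 b) :=
    (continuous_pow k).continuousOn.smul (hΦ.mono Ioo_subset_Ico_self)
  exact intervalIntegral.integral_hasDerivAt_right
    (((continuous_pow k).continuousOn.smul
      (hΦ.mono (Icc_subset_Ico_right hr.2))).intervalIntegrable_of_Icc hr.1.le)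
    (hcont.stronglyMeasurableAtFilter isOpen_Ioo r hr) (hcont.continuousAt (isOpen_Ioo.mem_nhds hr))

theorem hasDerivAt_radialDeriv (hΦ : ContinuousOn Φ (Ico 0 b)) (hr : r ∈ Ioo 0 b) :
    HasDerivAt (radialDeriv Φ) (Φ r - (4 / r) • radialDeriv Φ r) r := by
  have hr0 : r ≠ 0 := hr.1.ne'
  have h := ((hasDerivAt_pow 4 r).inv (pow_ne_zero 4 hr0)).smul (hasDerivAt_momentIntegral hΦ 4 hr)
  refine h.congr_deriv ?_
  simp only [radialDeriv, Pi.inv_apply]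
  match_scalars <;> field_simp

theorem hasDerivAt_radialSolution (c : E) (hΦ : ContinuousOn Φ (Ico 0 b)) (hr : r ∈ Ioo 0 b) :
    HasDerivAt (radialSolution c Φ) (radialDeriv Φ r) r := by
  have hr0 : r ≠ 0 := hr.1.ne'
  have h := (((hasDerivAt_momentIntegral hΦ 1 hr).sub (((hasDerivAt_pow 3 r).inv
    (pow_ne_zero 3 hr0)).smul (hasDerivAt_momentIntegral hΦ 4 hr))).const_smul
      (3 : ℝ)⁻¹).const_add c
  refine h.congr_deriv ?_
  simp only [radialDeriv, Pi.inv_apply]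
  match_scalars
  · field_simp
    ring
  · field_simp

theorem continuousOn_radialSolution (c : E) (hΦ : ContinuousOn Φ (Ico 0 b)) :
    ContinuousOn (radialSolution c Φ) (Ico 0 b) := by
  rintro r ⟨hr0, hrb⟩
  rcases hr0.eq_or_lt with rfl | hr0
  · obtain ⟨M, hM⟩ := isCompact_Icc.exists_bound_of_continuousOn
      (hΦ.mono (Icc_subset_Ico_right (half_lt_self hrb)))
    have hsmall : ∀ᶠ t in 𝓝[Ico 0 b] 0, ‖radialSolution c Φ t - c‖ ≤ M * t ^ 2 / 2 := by
      filter_upwards [self_mem_nhdsWithin, nhdsWithin_le_nhds (Iic_mem_nhds (half_pos hrb))]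
        with t ht htb
      exact norm_radialSolution_sub_self_le c ht.1
        (hΦ.mono fun s hs => ⟨hs.1, hs.2.trans_lt ht.2⟩) fun s hs => hM s ⟨hs.1, hs.2.trans htb⟩
    have hlim : Tendsto (fun t : ℝ => M * t ^ 2 / 2) (𝓝[Ico 0 b] 0) (𝓝 0) := by
      apply tendsto_nhdsWithin_of_tendsto_nhds
      simpa using ((continuous_const.mul (continuous_pow 2)).div_const 2).tendsto (0 : ℝ)
    rw [ContinuousWithinAt, radialSolution_zero, tendsto_iff_norm_sub_tendsto_zero]
    exact squeeze_zero' (Eventually.of_forall fun _ => norm_nonneg _) hsmall hlim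
  · exact (hasDerivAt_radialSolution c hΦ ⟨hr0, hrb⟩).continuousAt.continuousWithinAt

theorem eqOn_radialSolution {u u' : ℝ → E} {c : E} (hΦ : ContinuousOn Φ (Ico 0 b))
    (hu : ∀ r ∈ Ioo 0 b, HasDerivAt u (u' r) r)
    (hu' : ∀ r ∈ Ioo 0 b, HasDerivAt u' (Φ r - (4 / r) • u' r) r)
    (hlim : Tendsto u (𝓝[>] 0) (𝓝 c)) : EqOn u (radialSolution c Φ) (Ioo 0 b) := by
  intro r hr
  have hb : 0 < b := hr.1.trans hr.2
  have hR : Tendsto (radialSolution c Φ) (𝓝[>] 0) (𝓝 c) := by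
    have h := continuousOn_radialSolution c hΦ 0 ⟨le_rfl, hb⟩
    rw [ContinuousWithinAt, radialSolution_zero, ← nhdsWithin_Ioo_eq_nhdsGT hb] at *
    exact h.mono_left (nhdsWithin_mono _ Ioo_subset_Ico_self)
  have h := eqOn_zero_of_radial_homogeneous (v := u - radialSolution c Φ)
    (v' := u' - radialDeriv Φ) (fun r hr => (hu r hr).sub (hasDerivAt_radialSolution c hΦ hr))
    (fun r hr => ((hu' r hr).sub (hasDerivAt_radialDeriv hΦ hr)).congr_deriv (by
      simp only [Pi.sub_apply]
      module))
    (by rw [← sub_self c]; exact hlim.sub hR) hr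
  exact sub_eq_zero.mp h

end Radial

/- `exp (-L r² / 2) * J r` is antitone. -/
theorem eqOn_zero_of_hasDerivAt_le_mul {J J' : ℝ → ℝ} {b L : ℝ} (hJc : ContinuousOn J (Icc 0 b))
    (hJd : ∀ r ∈ Ioo 0 b, HasDerivAt J (J' r) r) (hJ' : ∀ r ∈ Ioo 0 b, J' r ≤ L * r * J r)
    (hJ0 : ∀ r ∈ Icc 0 b, 0 ≤ J r) (h0 : J 0 = 0) : EqOn J 0 (Icc 0 b) := by
  set θ := fun r => exp (-(L * r ^ 2 / 2)) * J r
  have hθd : ∀ r ∈ Ioo 0 b, HasDerivAt θ (exp (-(L * r ^ 2 / 2)) * (J' r - L * r * J r)) r := by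
    intro r hr
    have he : HasDerivAt (fun t => exp (-(L * t ^ 2 / 2))) (exp (-(L * r ^ 2 / 2)) * -(L * r)) r :=
      (((hasDerivAt_pow 2 r).const_mul L).div_const 2).neg.exp.congr_deriv (by
        simp only [Pi.neg_apply]
        ring)
    exact (he.mul (hJd r hr)).congr_deriv (by ring)
  have hanti : AntitoneOn θ (Icc 0 b) := by
    refine antitoneOn_of_deriv_nonpos (convex_Icc 0 b) (by fun_prop) ?_ ?_ <;> rw [interior_Icc]
    · exact fun r hr => (hθd r hr).differentiableAt.differentiableWithinAt
    · intro r hr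
      rw [(hθd r hr).deriv]
      exact mul_nonpos_of_nonneg_of_nonpos (exp_pos _).le (sub_nonpos.mpr (hJ' r hr))
  intro r hr
  have hθr : θ r ≤ 0 := by simpa [θ, h0] using hanti ⟨le_rfl, hr.1.trans hr.2⟩ hr hr.1
  exact le_antisymm (nonpos_of_mul_nonpos_right hθr (exp_pos _)) (hJ0 r hr)

theorem eqOn_zero_of_le_integral {φ : ℝ → ℝ} {b L : ℝ}
    (hφ : ContinuousOn φ (Icc 0 b)) (hφ0 : ∀ s ∈ Icc 0 b, 0 ≤ φ s)
    (h : ∀ r ∈ Icc 0 b, φ r ≤ L * ∫ s in (0 : ℝ)..r, s * φ s) : EqOn φ 0 (Icc 0 b) := by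
  have hcont : ContinuousOn (fun s => s * φ s) (Icc 0 b) := continuousOn_id.mul hφ
  have hJ0 : ∀ r ∈ Icc 0 b, 0 ≤ ∫ s in (0 : ℝ)..r, s * φ s := fun r hr =>
    intervalIntegral.integral_nonneg hr.1 fun s hs =>
      mul_nonneg hs.1 (hφ0 s ⟨hs.1, hs.2.trans hr.2⟩)
  have hJc : ContinuousOn (fun r => ∫ s in (0 : ℝ)..r, s * φ s) (Icc 0 b) := by
    rcases le_or_gt 0 b with hb | hb
    · simpa [uIcc_of_le hb] using intervalIntegral.continuousOn_primitive_interval (a := 0)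
        (b := b) (μ := volume)
        (by rw [uIcc_of_le hb]; exact hcont.integrableOn_compact isCompact_Icc)
    · simp [Icc_eq_empty_of_lt hb]
  have hJd : ∀ r ∈ Ioo 0 b, HasDerivAt (fun r => ∫ s in (0 : ℝ)..r, s * φ s) (r * φ r) r :=
    fun r hr => intervalIntegral.integral_hasDerivAt_right
      ((hcont.mono (Icc_subset_Icc_right hr.2.le)).intervalIntegrable_of_Icc hr.1.le)
      ((hcont.mono Ioo_subset_Icc_self).stronglyMeasurableAtFilter isOpen_Ioo r hr)
      (hcont.continuousAt (Icc_mem_nhds hr.1 hr.2))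
  have hJ := eqOn_zero_of_hasDerivAt_le_mul hJc hJd
    (fun r hr => by nlinarith [h r (Ioo_subset_Icc_self hr), hr.1]) hJ0 (by simp)
  intro r hr
  have hJr : ∫ s in (0 : ℝ)..r, s * φ s = 0 := hJ hr
  have := h r hr
  rw [hJr, mul_zero] at this
  exact le_antisymm this (hφ0 r hr)

section IntegralEquation

variable {E : Type*} [NormedAddCommGroup E] [NormedSpace ℝ E] {N : ℝ × E → E} {c : E}

theorem eqOn_of_eqOn_radialSolution (hN : LocallyLipschitz N) {b : ℝ} {y₁ y₂ : ℝ → E}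
    (hy₁ : ContinuousOn y₁ (Ico 0 b)) (hy₂ : ContinuousOn y₂ (Ico 0 b))
    (h₁ : EqOn y₁ (radialSolution c fun s => N (s, y₁ s)) (Ico 0 b))
    (h₂ : EqOn y₂ (radialSolution c fun s => N (s, y₂ s)) (Ico 0 b)) : EqOn y₁ y₂ (Ico 0 b) := by
  intro r hr
  have hsub : Icc 0 r ⊆ Ico 0 b := Icc_subset_Ico_right hr.2
  have hz₁ : ContinuousOn (fun s => (s, y₁ s)) (Icc 0 r) := continuousOn_id.prodMk (hy₁.mono hsub)
  have hz₂ : ContinuousOn (fun s => (s, y₂ s)) (Icc 0 r) := continuousOn_id.prodMk (hy₂.mono hsub)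
  obtain ⟨L, hL⟩ := hN.locallyLipschitzOn.exists_lipschitzOnWith_of_compact
    ((isCompact_Icc.image_of_continuousOn hz₁).union (isCompact_Icc.image_of_continuousOn hz₂))
  have hφ : ContinuousOn (fun s => ‖y₁ s - y₂ s‖) (Icc 0 r) := ((hy₁.sub hy₂).mono hsub).norm
  have hgron : ∀ t ∈ Icc 0 r, ‖y₁ t - y₂ t‖ ≤ L * ∫ s in (0 : ℝ)..t, s * ‖y₁ s - y₂ s‖ := by
    intro t ht
    have hsub' : Icc 0 t ⊆ Icc 0 r := Icc_subset_Icc_right ht.2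
    rw [h₁ (hsub ht), h₂ (hsub ht), ← intervalIntegral.integral_const_mul]
    refine (norm_radialSolution_sub_le (ξ := fun s => L * ‖y₁ s - y₂ s‖) c ht.1
      ((hN.continuous.comp_continuousOn hz₁).mono hsub')
      ((hN.continuous.comp_continuousOn hz₂).mono hsub')
      ((continuousOn_const.mul hφ).mono hsub') fun s hs => ?_).trans_eq ?_
    · exact hL.norm_sub_le_of_prodMk (Or.inl ⟨s, hsub' hs, rfl⟩) (Or.inr ⟨s, hsub' hs, rfl⟩)
    · congr 1
      ext s
      ring
  simpa [sub_eq_zero] using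
    eqOn_zero_of_le_integral hφ (fun _ _ => norm_nonneg _) hgron ⟨hr.1, le_rfl⟩

theorem norm_radialSolution_sub_le_of_lipschitzOnWith {S : Set (ℝ × E)} {L : NNReal} {r d : ℝ}
    {y₁ y₂ : ℝ → E} (hL : LipschitzOnWith L N S) (hr : 0 ≤ r)
    (hΦ₁ : ContinuousOn (fun s => N (s, y₁ s)) (Icc 0 r))
    (hΦ₂ : ContinuousOn (fun s => N (s, y₂ s)) (Icc 0 r))
    (hS : ∀ s ∈ Icc 0 r, (s, y₁ s) ∈ S ∧ (s, y₂ s) ∈ S) (hd : ∀ s ∈ Icc 0 r, ‖y₁ s - y₂ s‖ ≤ d) :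
    ‖radialSolution c (fun s => N (s, y₁ s)) r - radialSolution c (fun s => N (s, y₂ s)) r‖ ≤
      L * d * r ^ 2 / 2 := by
  refine (norm_radialSolution_sub_le (ξ := fun _ => L * d) c hr hΦ₁ hΦ₂ continuousOn_const
    fun s hs => (hL.norm_sub_le_of_prodMk (hS s hs).1 (hS s hs).2).trans
      (mul_le_mul_of_nonneg_left (hd s hs) L.2)).trans_eq ?_
  rw [intervalIntegral.integral_mul_const, integral_id]
  ring

variable [CompleteSpace E]

/- On the ball of radius `δ` about the constant `c` in `C([0, ε], E)`, the operator
`y ↦ radialSolution c (N (·, y ·))` moves `c` by at most `M ε² / 2` and has Lipschitz constant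
`L ε² / 2`. -/
theorem exists_eqOn_radialSolution_of_lipschitzOnWith {ε δ M : ℝ} {L : NNReal} (hε : 0 < ε)
    (hδ : 0 ≤ δ) (hN : Continuous N) (hM : ∀ z ∈ Icc 0 ε ×ˢ Metric.closedBall c δ, ‖N z‖ ≤ M)
    (hL : LipschitzOnWith L N (Icc 0 ε ×ˢ Metric.closedBall c δ))
    (hMε : M * ε ^ 2 / 2 ≤ δ) (hLε : L * ε ^ 2 / 2 ≤ 2⁻¹) :
    ∃ y : ℝ → E, Continuous y ∧ ∀ r ∈ Icc 0 ε, y r = radialSolution c (fun s => N (s, y s)) r := by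
  let ext : C(Icc 0 ε, E) → ℝ → E := fun x => IccExtend hε.le x
  have hΦ (x : C(Icc 0 ε, E)) : Continuous fun s => N (s, ext x s) :=
    hN.comp (continuous_id.prodMk x.continuous.Icc_extend')
  let T (x : C(Icc 0 ε, E)) : C(Icc 0 ε, E) :=
    ⟨fun t => radialSolution c (fun s => N (s, ext x s)) t,
      (continuousOn_radialSolution c (hΦ x).continuousOn).comp_continuous continuous_subtype_val
        fun t => ⟨t.2.1, t.2.2.trans_lt (lt_add_one ε)⟩⟩
  let x₀ : C(Icc 0 ε, E) := ContinuousMap.const _ c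
  have hball : ∀ x ∈ Metric.closedBall x₀ δ, ∀ s, ext x s ∈ Metric.closedBall c δ :=
    fun x hx s => (ContinuousMap.dist_apply_le_dist _).trans hx
  have hmem : ∀ x ∈ Metric.closedBall x₀ δ, ∀ s ∈ Icc 0 ε,
      (s, ext x s) ∈ Icc 0 ε ×ˢ Metric.closedBall c δ := fun x hx s hs => ⟨hs, hball x hx s⟩
  have hM0 : 0 ≤ M :=
    (norm_nonneg _).trans (hM (0, c) ⟨⟨le_rfl, hε.le⟩, Metric.mem_closedBall_self hδ⟩)
  have hmaps : MapsTo T (Metric.closedBall x₀ δ) (Metric.closedBall x₀ δ) := by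
    intro x hx
    rw [Metric.mem_closedBall, ContinuousMap.dist_le hδ]
    intro t
    have ht := t.2
    rw [dist_eq_norm]
    refine (norm_radialSolution_sub_self_le c ht.1 (hΦ x).continuousOn fun s hs =>
      hM _ (hmem x hx s ⟨hs.1, hs.2.trans ht.2⟩)).trans (hMε.trans' ?_)
    gcongr
    exacts [ht.1, ht.2]
  have hlip : LipschitzOnWith 2⁻¹ T (Metric.closedBall x₀ δ) := by
    refine LipschitzOnWith.of_dist_le_mul fun x hx x' hx' => ?_
    rw [ContinuousMap.dist_le (by positivity)]
    intro t
    have ht := t.2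
    rw [dist_eq_norm]
    refine (norm_radialSolution_sub_le_of_lipschitzOnWith hL ht.1 (hΦ x).continuousOn
      (hΦ x').continuousOn (fun s hs => ⟨hmem x hx s ⟨hs.1, hs.2.trans ht.2⟩,
        hmem x' hx' s ⟨hs.1, hs.2.trans ht.2⟩⟩)
      fun s _ => (dist_eq_norm _ _).symm.trans_le (ContinuousMap.dist_apply_le_dist _)).trans ?_
    calc L * dist x x' * (t : ℝ) ^ 2 / 2 ≤ L * ε ^ 2 / 2 * dist x x' := by
          rw [mul_right_comm, mul_div_right_comm]
          gcongr
          exacts [ht.1, ht.2]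
      _ ≤ (2⁻¹ : NNReal) * dist x x' := by
          rw [NNReal.coe_inv, NNReal.coe_ofNat]
          gcongr
  obtain ⟨x, -, hx, -⟩ := ContractingWith.exists_fixedPoint' Metric.isClosed_closedBall.isComplete
    hmaps ⟨by norm_num, hlip.mapsToRestrict hmaps⟩ (Metric.mem_closedBall_self hδ)
    (edist_ne_top _ _)
  refine ⟨ext x, x.continuous.Icc_extend', fun r hr => ?_⟩
  rw [show ext x r = x ⟨r, hr⟩ from IccExtend_of_mem _ _ hr]
  exact (congrArg (fun z : C(Icc 0 ε, E) => z ⟨r, hr⟩) hx).symm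

theorem exists_continuous_eqOn_radialSolution (hN : LocallyLipschitz N) (c : E) :
    ∃ ε > 0, ∃ y : ℝ → E, Continuous y ∧
      ∀ r ∈ Icc 0 ε, y r = radialSolution c (fun s => N (s, y s)) r := by
  obtain ⟨L, U, hU, hLU⟩ := hN (0, c)
  obtain ⟨δ, hδ, hδU⟩ := Metric.nhds_basis_closedBall.mem_iff.mp hU
  set M := ‖N (0, c)‖ + L * δ
  have hsmall : ∀ᶠ ε in 𝓝[>] (0 : ℝ),
      0 < ε ∧ ε ≤ δ ∧ M * ε ^ 2 / 2 ≤ δ ∧ L * ε ^ 2 / 2 ≤ 2⁻¹ := by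
    have h (K : ℝ) : Tendsto (fun ε : ℝ => K * ε ^ 2 / 2) (𝓝 0) (𝓝 0) := by
      simpa using (((continuous_pow 2).const_mul K).div_const 2).tendsto 0
    refine eventually_mem_nhdsWithin.and (nhdsWithin_le_nhds ((eventually_le_nhds hδ).and
      (((h M).eventually (eventually_le_nhds hδ)).and
        ((h L).eventually (eventually_le_nhds (by norm_num))))))
  obtain ⟨ε, hε, hεδ, hMε, hLε⟩ := hsmall.exists
  have hS : Icc 0 ε ×ˢ Metric.closedBall c δ ⊆ Metric.closedBall (0, c) δ := by
    rintro ⟨s, y⟩ ⟨hs, hy⟩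
    rw [← closedBall_prod_same]
    exact ⟨by simpa [abs_of_nonneg hs.1] using hs.2.trans hεδ, hy⟩
  refine ⟨ε, hε, exists_eqOn_radialSolution_of_lipschitzOnWith hε hδ.le hN.continuous
    (fun z hz => ?_) (hLU.mono (hS.trans hδU)) hMε hLε⟩
  have h := hLU.dist_le_mul z (hδU (hS hz)) (0, c) (hδU (Metric.mem_closedBall_self hδ.le))
  rw [dist_eq_norm] at h
  calc ‖N z‖ ≤ ‖N (0, c)‖ + ‖N z - N (0, c)‖ := norm_le_norm_add_norm_sub' _ _
    _ ≤ ‖N (0, c)‖ + L * δ :=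
      add_le_add_right (h.trans (mul_le_mul_of_nonneg_left (hS hz) L.2)) _

end IntegralEquation

/- With `f = 1 + r² P` and `ρ = r Q` the system becomes `P'' + (4 / r) P' = N₁ (r, P, Q)`,
`Q'' + (4 / r) Q' = N₂ (r, P, Q)` for `N = monopoleNonlinearity g₀ lam ρ₀`. -/
def monopoleNonlinearity (g₀ lam ρ₀ : ℝ) (z : ℝ × ℝ × ℝ) : ℝ × ℝ :=
  (z.2.1 ^ 2 * (z.1 ^ 2 * z.2.1 + 3) + g₀ ^ 2 * z.2.2 ^ 2 * (1 + z.1 ^ 2 * z.2.1),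
    (2 * z.1 ^ 2 * z.2.1 ^ 2 + 4 * z.2.1 + lam * (z.1 ^ 2 * z.2.2 ^ 2 - ρ₀ ^ 2)) * z.2.2)

theorem locallyLipschitz_monopoleNonlinearity (g₀ lam ρ₀ : ℝ) :
    LocallyLipschitz (monopoleNonlinearity g₀ lam ρ₀) :=
  ContDiff.locallyLipschitz (𝕂 := ℝ) (by unfold monopoleNonlinearity; fun_prop)

theorem monopole_components_iff {g₀ lam ρ₀ r : ℝ} (hr : r ≠ 0) (P P' P'' Q Q' Q'' : ℝ) :
    ((2 * P + 4 * r * P' + r ^ 2 * P'') - ((1 + r ^ 2 * P) ^ 2 - 1) / r ^ 2 * (1 + r ^ 2 * P)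
        = g₀ ^ 2 * (r * Q) ^ 2 * (1 + r ^ 2 * P) ∧
      (2 * Q' + r * Q'') + 2 / r * (Q + r * Q') - 2 * (1 + r ^ 2 * P) ^ 2 / r ^ 2 * (r * Q)
        = lam * ((r * Q) ^ 2 - ρ₀ ^ 2) * (r * Q)) ↔
    (P'', Q'') = monopoleNonlinearity g₀ lam ρ₀ (r, P, Q) - (4 / r) • (P', Q') := by
  simp only [monopoleNonlinearity, Prod.ext_iff, Prod.fst_sub, Prod.snd_sub, Prod.smul_fst,
    Prod.smul_snd, smul_eq_mul]
  refine and_congr ⟨fun h => ?_, fun h => ?_⟩ ⟨fun h => ?_, fun h => ?_⟩ <;> field_simp at h ⊢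
  · exact mul_left_cancel₀ (pow_ne_zero 3 hr) (by linear_combination h)
  · linear_combination r ^ 3 * h
  · exact mul_left_cancel₀ hr (by linear_combination h)
  · linear_combination r * h

def MonopoleSystem (g₀ lam ρ₀ : ℝ) (f ρ : ℝ → ℝ) (r : ℝ) : Prop :=
  deriv (deriv f) r - (((f r) ^ 2 - 1) / r ^ 2) * f r = g₀ ^ 2 * (ρ r) ^ 2 * f r ∧
    deriv (deriv ρ) r + (2 / r) * deriv ρ r - (2 * (f r) ^ 2 / r ^ 2) * ρ r
      = lam * ((ρ r) ^ 2 - ρ₀ ^ 2) * ρ r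

theorem monopoleSystem_iff {g₀ lam ρ₀ r : ℝ} {y y' y'' : ℝ → ℝ × ℝ} {f ρ : ℝ → ℝ}
    {s : Set ℝ} (hs : IsOpen s) (hy : ∀ x ∈ s, HasDerivAt y (y' x) x)
    (hy' : ∀ x ∈ s, HasDerivAt y' (y'' x) x) (hf : EqOn f (fun t => 1 + t ^ 2 * (y t).1) s)
    (hρ : EqOn ρ (fun t => t * (y t).2) s) (hr : r ∈ s) (hr0 : r ≠ 0) :
    MonopoleSystem g₀ lam ρ₀ f ρ r ↔
      y'' r = monopoleNonlinearity g₀ lam ρ₀ (r, y r) - (4 / r) • y' r := by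
  have hf' : ∀ x ∈ s, HasDerivAt f (2 * x * (y x).1 + x ^ 2 * (y' x).1) x := fun x hx =>
    (((hasDerivAt_pow 2 x).mul (hy x hx).fst).const_add 1).congr_of_eventuallyEq
      (eventually_of_mem (hs.mem_nhds hx) hf) |>.congr_deriv (by ring)
  have hρ' : ∀ x ∈ s, HasDerivAt ρ ((y x).2 + x * (y' x).2) x := fun x hx =>
    ((hasDerivAt_id x).mul (hy x hx).snd).congr_of_eventuallyEq
      (eventually_of_mem (hs.mem_nhds hx) hρ) |>.congr_deriv (by simp)
  have hf'' : deriv (deriv f) r = 2 * (y r).1 + 4 * r * (y' r).1 + r ^ 2 * (y'' r).1 := by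
    rw [deriv_deriv_eq_of_hasDerivAt hs hf' ((((hasDerivAt_id r).const_mul 2).mul
      (hy r hr).fst).add ((hasDerivAt_pow 2 r).mul (hy' r hr).fst)) hr]
    simp only [id, Nat.cast_ofNat]
    ring
  have hρ'' : deriv (deriv ρ) r = 2 * (y' r).2 + r * (y'' r).2 := by
    rw [deriv_deriv_eq_of_hasDerivAt hs hρ' ((hy r hr).snd.add
      ((hasDerivAt_id r).mul (hy' r hr).snd)) hr, id]
    ring
  rw [← Prod.mk.eta (p := y'' r), ← Prod.mk.eta (p := y' r), ← Prod.mk.eta (p := y r),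
    ← monopole_components_iff hr0, MonopoleSystem, hf hr, hρ hr, (hρ' r hr).deriv, hf'', hρ'']

def IsMonopoleSolution (α β g₀ lam ρ₀ ε : ℝ) (f ρ : ℝ → ℝ) : Prop :=
  ContDiffOn ℝ 2 f (Ioo 0 ε) ∧ ContDiffOn ℝ 2 ρ (Ioo 0 ε) ∧
    (∀ r ∈ Ioo (0 : ℝ) ε, MonopoleSystem g₀ lam ρ₀ f ρ r) ∧
    Tendsto (fun r => (f r - 1 + α * r ^ 2) / r ^ 2) (𝓝[>] 0) (𝓝 0) ∧
    Tendsto (fun r => (ρ r - β * r) / r) (𝓝[>] 0) (𝓝 0)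

def monopoleReduced (f ρ : ℝ → ℝ) (r : ℝ) : ℝ × ℝ := ((f r - 1) / r ^ 2, ρ r / r)

theorem tendsto_monopoleReduced_iff {α β : ℝ} {f ρ : ℝ → ℝ} :
    Tendsto (monopoleReduced f ρ) (𝓝[>] 0) (𝓝 (-α, β)) ↔
      Tendsto (fun r => (f r - 1 + α * r ^ 2) / r ^ 2) (𝓝[>] 0) (𝓝 0) ∧
        Tendsto (fun r => (ρ r - β * r) / r) (𝓝[>] 0) (𝓝 0) := by
  rw [nhds_prod_eq, tendsto_prod_iff']
  refine and_congr ?_ ?_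
  · rw [← tendsto_add_const_iff α, neg_add_cancel]
    refine tendsto_congr' ?_
    filter_upwards [self_mem_nhdsWithin] with r (hr : 0 < r)
    simp only [monopoleReduced]
    field_simp
  · rw [← tendsto_sub_const_iff β, sub_self]
    refine tendsto_congr' ?_
    filter_upwards [self_mem_nhdsWithin] with r (hr : 0 < r)
    simp only [monopoleReduced]
    field_simp

theorem isMonopoleSolution_of_eqOn_radialSolution {α β g₀ lam ρ₀ ε : ℝ} {y : ℝ → ℝ × ℝ}
    (hε : 0 ≤ ε) (hy : Continuous y) (hfix : ∀ r ∈ Icc 0 ε,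
      y r = radialSolution (-α, β) (fun s => monopoleNonlinearity g₀ lam ρ₀ (s, y s)) r) :
    IsMonopoleSolution α β g₀ lam ρ₀ ε (fun r => 1 + r ^ 2 * (y r).1) (fun r => r * (y r).2) := by
  set Φ := fun s => monopoleNonlinearity g₀ lam ρ₀ (s, y s)
  have hΦ : Continuous Φ := (locallyLipschitz_monopoleNonlinearity g₀ lam ρ₀).continuous.comp
    (continuous_id.prodMk hy)
  have hy' : ∀ r ∈ Ioo 0 ε, HasDerivAt y (radialDeriv Φ r) r := fun r hr =>
    (hasDerivAt_radialSolution _ hΦ.continuousOn hr).congr_of_eventuallyEq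
      (eventually_of_mem (isOpen_Ioo.mem_nhds hr) fun t ht => hfix t (Ioo_subset_Icc_self ht))
  have hy'' : ∀ r ∈ Ioo 0 ε,
      HasDerivAt (radialDeriv Φ) (Φ r - (4 / r) • radialDeriv Φ r) r := fun r hr =>
    hasDerivAt_radialDeriv hΦ.continuousOn hr
  have hyC : ContDiffOn ℝ 2 y (Ioo 0 ε) := contDiffOn_two_of_hasDerivAt isOpen_Ioo hy' hy'' <|
    hΦ.continuousOn.sub (ContinuousOn.smul (continuousOn_const.div continuousOn_id
      fun r hr => hr.1.ne') fun r hr => (hy'' r hr).continuousAt.continuousWithinAt)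
  refine ⟨contDiffOn_const.add ((contDiffOn_id.pow 2).mul (contDiff_fst.comp_contDiffOn hyC)),
    contDiffOn_id.mul (contDiff_snd.comp_contDiffOn hyC),
    fun r hr => (monopoleSystem_iff isOpen_Ioo hy' hy'' (fun _ _ => rfl) (fun _ _ => rfl) hr
      hr.1.ne').mpr rfl, tendsto_monopoleReduced_iff.mp ?_⟩
  have hy0 : y 0 = (-α, β) := by rw [hfix 0 ⟨le_rfl, hε⟩, radialSolution_zero]
  rw [← hy0]
  refine ((hy.tendsto 0).mono_left nhdsWithin_le_nhds).congr' ?_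
  filter_upwards [self_mem_nhdsWithin] with r (hr : 0 < r)
  simp only [monopoleReduced, add_sub_cancel_left]
  ext <;> field_simp

theorem one_add_sq_mul_monopoleReduced_fst (f ρ : ℝ → ℝ) {r : ℝ} (hr : r ≠ 0) :
    1 + r ^ 2 * (monopoleReduced f ρ r).1 = f r := by
  simp only [monopoleReduced]
  field_simp
  ring

theorem mul_monopoleReduced_snd (f ρ : ℝ → ℝ) {r : ℝ} (hr : r ≠ 0) :
    r * (monopoleReduced f ρ r).2 = ρ r := by
  simp only [monopoleReduced]
  field_simp

theorem contDiffOn_monopoleReduced {ε : ℝ} {f ρ : ℝ → ℝ} (hf : ContDiffOn ℝ 2 f (Ioo 0 ε))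
    (hρ : ContDiffOn ℝ 2 ρ (Ioo 0 ε)) : ContDiffOn ℝ 2 (monopoleReduced f ρ) (Ioo 0 ε) :=
  ((hf.sub contDiffOn_const).div (contDiffOn_id.pow 2) fun _ hr => pow_ne_zero 2 hr.1.ne').prodMk
    (hρ.div contDiffOn_id fun _ hr => hr.1.ne')

theorem hasDerivAt_deriv_monopoleReduced {g₀ lam ρ₀ ε r : ℝ} {f ρ : ℝ → ℝ}
    (hf : ContDiffOn ℝ 2 f (Ioo 0 ε)) (hρ : ContDiffOn ℝ 2 ρ (Ioo 0 ε))
    (hsys : MonopoleSystem g₀ lam ρ₀ f ρ r) (hr : r ∈ Ioo 0 ε) :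
    HasDerivAt (deriv (monopoleReduced f ρ)) (monopoleNonlinearity g₀ lam ρ₀
      (r, monopoleReduced f ρ r) - (4 / r) • deriv (monopoleReduced f ρ) r) r := by
  have hY := contDiffOn_monopoleReduced hf hρ
  have hY' : ∀ t ∈ Ioo 0 ε, HasDerivAt (deriv (monopoleReduced f ρ))
      (deriv (deriv (monopoleReduced f ρ)) t) t := fun t ht =>
    (hY.deriv_of_isOpen isOpen_Ioo (by norm_num)).hasDerivAt_deriv isOpen_Ioo ht
  rw [← (monopoleSystem_iff isOpen_Ioo (fun t ht => (hY.of_le one_le_two).hasDerivAt_deriv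
    isOpen_Ioo ht) hY' (fun t ht => (one_add_sq_mul_monopoleReduced_fst f ρ ht.1.ne').symm)
    (fun t ht => (mul_monopoleReduced_snd f ρ ht.1.ne').symm) hr hr.1.ne').mp hsys]
  exact hY' r hr

/- `monopoleReduced f ρ` has junk values at `0`; it is redefined there as its limit. -/
theorem exists_eqOn_radialSolution_of_isMonopoleSolution {α β g₀ lam ρ₀ ε : ℝ} {f ρ : ℝ → ℝ}
    (h : IsMonopoleSolution α β g₀ lam ρ₀ ε f ρ) :
    ∃ y : ℝ → ℝ × ℝ, ContinuousOn y (Ico 0 ε) ∧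
      EqOn y (radialSolution (-α, β) fun s => monopoleNonlinearity g₀ lam ρ₀ (s, y s))
        (Ico 0 ε) ∧
      EqOn f (fun r => 1 + r ^ 2 * (y r).1) (Ioo 0 ε) ∧
      EqOn ρ (fun r => r * (y r).2) (Ioo 0 ε) := by
  obtain ⟨hf, hρ, hsys, hlim⟩ := h
  set Y := monopoleReduced f ρ
  have hY := contDiffOn_monopoleReduced hf hρ
  set y := Function.update Y 0 (-α, β)
  have hyY {r : ℝ} (hr : r ≠ 0) : y r = Y r := Function.update_of_ne hr _ _
  have hyY' : ∀ r ∈ Ioo 0 ε, y =ᶠ[𝓝 r] Y := fun r hr =>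
    (eventually_ne_nhds hr.1.ne').mono fun t ht => hyY ht
  have hlimY : Tendsto Y (𝓝[>] 0) (𝓝 (-α, β)) := tendsto_monopoleReduced_iff.mpr hlim
  have hyc : ContinuousOn y (Ico 0 ε) := by
    rintro r ⟨hr0, hrε⟩
    rcases hr0.eq_or_lt with rfl | hr0
    · rw [continuousWithinAt_update_same, Ico_sdiff_left, nhdsWithin_Ioo_eq_nhdsGT hrε]
      exact hlimY
    · exact ((hY.continuousOn.continuousAt (isOpen_Ioo.mem_nhds ⟨hr0, hrε⟩)).congr
        (hyY' r ⟨hr0, hrε⟩).symm).continuousWithinAt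
  refine ⟨y, hyc, ?_, fun r hr => ?_, fun r hr => ?_⟩
  · rintro r ⟨hr0, hrε⟩
    rcases hr0.eq_or_lt with rfl | hr0
    · simp [y]
    refine eqOn_radialSolution (Φ := fun s => monopoleNonlinearity g₀ lam ρ₀ (s, y s))
      ((locallyLipschitz_monopoleNonlinearity g₀ lam ρ₀).continuous.comp_continuousOn
        (continuousOn_id.prodMk hyc))
      (fun t ht => ((hY.of_le one_le_two).hasDerivAt_deriv isOpen_Ioo ht).congr_of_eventuallyEq
        (hyY' t ht)) (fun t ht => ?_)
      (hlimY.congr' (eventually_of_mem self_mem_nhdsWithin fun t (ht : 0 < t) => (hyY ht.ne').symm))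
      ⟨hr0, hrε⟩
    simpa only [hyY ht.1.ne'] using hasDerivAt_deriv_monopoleReduced hf hρ (hsys t ht) ht
  · show f r = 1 + r ^ 2 * (y r).1
    rw [hyY hr.1.ne', one_add_sq_mul_monopoleReduced_fst f ρ hr.1.ne']
  · show ρ r = r * (y r).2
    rw [hyY hr.1.ne', mul_monopoleReduced_snd f ρ hr.1.ne']

theorem stmt15_general (α β g₀ lam ρ₀ : ℝ) :
    ∃ ε > (0 : ℝ), ∃ f ρ : ℝ → ℝ,
      (ContDiffOn ℝ 2 f (Ioo 0 ε) ∧ ContDiffOn ℝ 2 ρ (Ioo 0 ε) ∧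
        (∀ r ∈ Ioo (0 : ℝ) ε,
          deriv (deriv f) r - (((f r) ^ 2 - 1) / r ^ 2) * f r
            = g₀ ^ 2 * (ρ r) ^ 2 * f r ∧
          deriv (deriv ρ) r + (2 / r) * deriv ρ r - (2 * (f r) ^ 2 / r ^ 2) * ρ r
            = lam * ((ρ r) ^ 2 - ρ₀ ^ 2) * ρ r) ∧
        Tendsto (fun r => (f r - 1 + α * r ^ 2) / r ^ 2) (nhdsWithin 0 (Ioi 0)) (nhds 0) ∧
        Tendsto (fun r => (ρ r - β * r) / r) (nhdsWithin 0 (Ioi 0)) (nhds 0)) ∧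
      (∀ f₂ ρ₂ : ℝ → ℝ,
        (ContDiffOn ℝ 2 f₂ (Ioo 0 ε) ∧ ContDiffOn ℝ 2 ρ₂ (Ioo 0 ε) ∧
          (∀ r ∈ Ioo (0 : ℝ) ε,
            deriv (deriv f₂) r - (((f₂ r) ^ 2 - 1) / r ^ 2) * f₂ r
              = g₀ ^ 2 * (ρ₂ r) ^ 2 * f₂ r ∧
            deriv (deriv ρ₂) r + (2 / r) * deriv ρ₂ r
              - (2 * (f₂ r) ^ 2 / r ^ 2) * ρ₂ r
              = lam * ((ρ₂ r) ^ 2 - ρ₀ ^ 2) * ρ₂ r) ∧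
          Tendsto (fun r => (f₂ r - 1 + α * r ^ 2) / r ^ 2) (nhdsWithin 0 (Ioi 0)) (nhds 0) ∧
          Tendsto (fun r => (ρ₂ r - β * r) / r) (nhdsWithin 0 (Ioi 0)) (nhds 0)) →
        EqOn f f₂ (Ioo 0 ε) ∧ EqOn ρ ρ₂ (Ioo 0 ε)) := by
  have hN := locallyLipschitz_monopoleNonlinearity g₀ lam ρ₀
  obtain ⟨ε, hε, y, hy, hfix⟩ := exists_continuous_eqOn_radialSolution hN (-α, β)
  refine ⟨ε, hε, fun r => 1 + r ^ 2 * (y r).1, fun r => r * (y r).2,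
    isMonopoleSolution_of_eqOn_radialSolution hε.le hy hfix, fun f₂ ρ₂ h₂ => ?_⟩
  obtain ⟨y₂, hy₂, hfix₂, hf₂, hρ₂⟩ := exists_eqOn_radialSolution_of_isMonopoleSolution h₂
  have hyy₂ := eqOn_of_eqOn_radialSolution hN hy.continuousOn hy₂
    (fun r hr => hfix r (Ico_subset_Icc_self hr)) hfix₂
  refine ⟨fun r hr => ?_, fun r hr => ?_⟩
  · simp only [hf₂ hr, hyy₂ (Ioo_subset_Ico_self hr)]
  · simp only [hρ₂ hr, hyy₂ (Ioo_subset_Ico_self hr)]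

theorem stmt15 (α β g₀ lam ρ₀ : ℝ) (hg : 0 < g₀) (hlam : 0 < lam) (hρ₀ : 0 < ρ₀) :
    ∃ ε > (0 : ℝ), ∃ f ρ : ℝ → ℝ,
      (ContDiffOn ℝ 2 f (Ioo 0 ε) ∧ ContDiffOn ℝ 2 ρ (Ioo 0 ε) ∧
        (∀ r ∈ Ioo (0 : ℝ) ε,
          deriv (deriv f) r - (((f r) ^ 2 - 1) / r ^ 2) * f r
            = g₀ ^ 2 * (ρ r) ^ 2 * f r ∧
          deriv (deriv ρ) r + (2 / r) * deriv ρ r - (2 * (f r) ^ 2 / r ^ 2) * ρ r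
            = lam * ((ρ r) ^ 2 - ρ₀ ^ 2) * ρ r) ∧
        Tendsto (fun r => (f r - 1 + α * r ^ 2) / r ^ 2) (nhdsWithin 0 (Ioi 0)) (nhds 0) ∧
        Tendsto (fun r => (ρ r - β * r) / r) (nhdsWithin 0 (Ioi 0)) (nhds 0)) ∧
      (∀ f₂ ρ₂ : ℝ → ℝ,
        (ContDiffOn ℝ 2 f₂ (Ioo 0 ε) ∧ ContDiffOn ℝ 2 ρ₂ (Ioo 0 ε) ∧
          (∀ r ∈ Ioo (0 : ℝ) ε,
            deriv (deriv f₂) r - (((f₂ r) ^ 2 - 1) / r ^ 2) * f₂ r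
              = g₀ ^ 2 * (ρ₂ r) ^ 2 * f₂ r ∧
            deriv (deriv ρ₂) r + (2 / r) * deriv ρ₂ r
              - (2 * (f₂ r) ^ 2 / r ^ 2) * ρ₂ r
              = lam * ((ρ₂ r) ^ 2 - ρ₀ ^ 2) * ρ₂ r) ∧
          Tendsto (fun r => (f₂ r - 1 + α * r ^ 2) / r ^ 2) (nhdsWithin 0 (Ioi 0)) (nhds 0) ∧
          Tendsto (fun r => (ρ₂ r - β * r) / r) (nhdsWithin 0 (Ioi 0)) (nhds 0)) →
        EqOn f f₂ (Ioo 0 ε) ∧ EqOn ρ ρ₂ (Ioo 0 ε)) :=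
  stmt15_general α β g₀ lam ρ₀
end
end
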